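/- Dual Murnaghan–Nakayama rule: for every k ≥ 1, the operator ρ^(k) (defined by ρ^(1) = ξ, ρ^(k+1) = [ρ^(k), ∇]/k) acts on Schur functions by ρ^(k)(s_λ) = Σ_μ (−1)^{ht(λ∖μ) − 1} s_μ, where the sum is over partitions μ ⊂ λ with |μ| = |λ| − k such that λ∖μ is a border strip (connected skew shape containing no 2×2 square) of k boxes, and ht is the number of rows of the border strip. -/

import Mathlib

/-- `Covers μ lam` : `μ` is obtained from `lam` by deleting a single box. -/
def Covers (mu lam : YoungDiagram) : Prop :=
  mu.cells ⊆ lam.cells ∧ lam.cells.card = mu.cells.card + 1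

/-- The sum of the contents `j - i` of the boxes of `lam` that are not in `mu`. -/
def remContent (mu lam : YoungDiagram) : ℤ :=
  ∑ c ∈ lam.cells \ mu.cells, ((c.2 : ℤ) - (c.1 : ℤ))

instance (mu lam : YoungDiagram) : Decidable (Covers mu lam) := by
  unfold Covers; infer_instance

instance : DecidableEq YoungDiagram :=
  fun a b => decidable_of_iff (a.cells = b.cells) (YoungDiagram.ext_iff).symm
/-- The one-row Young diagram `(k)`. -/
def rowYD (k : ℕ) : YoungDiagram := YoungDiagram.ofRowLens [k] (by
  intro i j _; obtain ⟨i, hi⟩ := i; obtain ⟨j, hj⟩ := j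
  simp at hi hj; subst hi; subst hj; exact le_rfl)

/-- The hook-shaped Young diagram `(r, 1^a)` (for `r ≥ 1`). -/
def hookYD (r a : ℕ) : YoungDiagram where
  cells := ((Finset.range r).image fun j => (0, j)) ∪
    ((Finset.range (a + 1)).image fun i => (i, 0))
  isLowerSet := by
    intro x y hxy hy
    obtain ⟨h1, h2⟩ : y.1 ≤ x.1 ∧ y.2 ≤ x.2 := Prod.le_def.mp hxy
    simp only [Finset.coe_union, Finset.coe_image, Finset.coe_range, Set.mem_union,
      Set.mem_image, Set.mem_Iio] at hy ⊢
    rcases hy with ⟨j, hj, hje⟩ | ⟨i, hi, hie⟩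
    · have hx1 : x.1 = 0 := by rw [← hje]
      have hx2 : x.2 = j := by rw [← hje]
      left
      exact ⟨y.2, by omega, by
        have hy1 : y.1 = 0 := by omega
        rw [Prod.ext_iff]; exact ⟨hy1.symm, rfl⟩⟩
    · have hx1 : x.1 = i := by rw [← hie]
      have hx2 : x.2 = 0 := by rw [← hie]
      right
      exact ⟨y.1, by omega, by
        have hy2 : y.2 = 0 := by omega
        rw [Prod.ext_iff]; exact ⟨rfl, hy2.symm⟩⟩

/-- `mu / lam` is a horizontal strip: no two of its boxes lie in the same column. -/
def IsHStrip (lam mu : YoungDiagram) : Prop :=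
  lam.cells ⊆ mu.cells ∧ ∀ c ∈ mu.cells, c ∉ lam.cells → (c.1 + 1, c.2) ∉ mu.cells

instance (lam mu : YoungDiagram) : Decidable (IsHStrip lam mu) := by
  unfold IsHStrip; infer_instance

/-- The bosonic operators: `rhoOp xi nabla n` is `ρ⁽ⁿ⁺¹⁾`, defined by `ρ⁽¹⁾ = ξ` and
`ρ⁽ᵏ⁺¹⁾ = (ρ⁽ᵏ⁾∇ - ∇ρ⁽ᵏ⁾)/k`. -/
noncomputable def rhoOp {L : Type*} [CommRing L] [Algebra ℚ L]
    (xi nabla : Module.End ℚ L) : ℕ → Module.End ℚ L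
  | 0 => xi
  | n + 1 => ((n : ℚ) + 1)⁻¹ • (rhoOp xi nabla n * nabla - nabla * rhoOp xi nabla n)

/-- Two cells are adjacent if they share an edge. -/
def CellAdj (a b : ℕ × ℕ) : Prop :=
  (a.1 = b.1 ∧ (a.2 + 1 = b.2 ∨ b.2 + 1 = a.2)) ∨
  (a.2 = b.2 ∧ (a.1 + 1 = b.1 ∨ b.1 + 1 = a.1))

/-- A finite set of cells is a border strip if it is nonempty, edge-connected, and
contains no `2 × 2` square. -/
def IsBorderStrip (D : Finset (ℕ × ℕ)) : Prop :=
  D.Nonempty ∧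
  (∀ c ∈ D, ∀ c' ∈ D,
    Relation.ReflTransGen (fun x y => x ∈ D ∧ y ∈ D ∧ CellAdj x y) c c') ∧
  ∀ i j : ℕ, (i, j) ∈ D → (i + 1, j + 1) ∉ D

/-- The height of a strip: its number of (occupied) rows. -/
def stripHt (D : Finset (ℕ × ℕ)) : ℕ := (D.image Prod.fst).card

open Finset

namespace DMN

/-! ### Basic Young diagram row infrastructure -/

theorem ydext {a b : YoungDiagram} (h : ∀ i, a.rowLen i = b.rowLen i) : a = b := by
  ext ⟨i, j⟩
  rw [YoungDiagram.mem_cells, YoungDiagram.mem_cells, YoungDiagram.mem_iff_lt_rowLen,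
    YoungDiagram.mem_iff_lt_rowLen, h i]

theorem rowLen_zero_of_colLen_le (lam : YoungDiagram) {i : ℕ} (h : lam.colLen 0 ≤ i) :
    lam.rowLen i = 0 := by
  by_contra hne
  have : (i, 0) ∈ lam := YoungDiagram.mem_iff_lt_rowLen.2 (Nat.pos_of_ne_zero hne)
  rw [YoungDiagram.mem_iff_lt_colLen] at this
  omega

theorem lt_colLen_of_rowLen_pos (lam : YoungDiagram) {i : ℕ} (h : 0 < lam.rowLen i) :
    i < lam.colLen 0 := by
  by_contra hne
  have := rowLen_zero_of_colLen_le lam (not_lt.1 hne)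
  omega

theorem subset_iff_rowLen {mu lam : YoungDiagram} :
    mu.cells ⊆ lam.cells ↔ ∀ i, mu.rowLen i ≤ lam.rowLen i := by
  constructor
  · intro h i
    by_contra hlt
    push_neg at hlt
    have h1 : (i, lam.rowLen i) ∈ mu := YoungDiagram.mem_iff_lt_rowLen.2 hlt
    have h2 := h (YoungDiagram.mem_cells _ |>.2 h1)
    rw [YoungDiagram.mem_cells, YoungDiagram.mem_iff_lt_rowLen] at h2
    omega
  · intro h c hc
    rw [YoungDiagram.mem_cells, YoungDiagram.mem_iff_lt_rowLen] at hc ⊢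
    exact lt_of_lt_of_le hc (h c.1)

theorem mem_sdiff_iff {mu lam : YoungDiagram} {i j : ℕ} :
    (i, j) ∈ lam.cells \ mu.cells ↔ mu.rowLen i ≤ j ∧ j < lam.rowLen i := by
  rw [Finset.mem_sdiff, YoungDiagram.mem_cells, YoungDiagram.mem_cells,
    YoungDiagram.mem_iff_lt_rowLen, YoungDiagram.mem_iff_lt_rowLen]
  omega

theorem sdiff_eq_biUnion {mu lam : YoungDiagram} {M : ℕ} (hM : lam.colLen 0 ≤ M) :
    lam.cells \ mu.cells =
      (range M).biUnion (fun i => {i} ×ˢ Finset.Ico (mu.rowLen i) (lam.rowLen i)) := by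
  ext ⟨i, j⟩
  simp only [mem_sdiff_iff, Finset.mem_biUnion, Finset.mem_range, Finset.mem_product,
    Finset.mem_singleton, Finset.mem_Ico]
  constructor
  · intro ⟨h1, h2⟩
    exact ⟨i, lt_of_lt_of_le (lt_colLen_of_rowLen_pos lam (by omega)) hM, rfl, h1, h2⟩
  · rintro ⟨i', _, rfl, h1, h2⟩
    exact ⟨h1, h2⟩

theorem card_sdiff_eq {mu lam : YoungDiagram} {M : ℕ} (hM : lam.colLen 0 ≤ M) :
    (lam.cells \ mu.cells).card = ∑ i ∈ range M, (lam.rowLen i - mu.rowLen i) := by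
  rw [sdiff_eq_biUnion hM, Finset.card_biUnion]
  · apply Finset.sum_congr rfl
    intro i _
    rw [Finset.card_product, Finset.card_singleton, Nat.card_Ico, one_mul]
  · intro x _ y _ hxy
    simp only [Finset.disjoint_left, Finset.mem_product, Finset.mem_singleton]
    rintro ⟨a, b⟩ ⟨rfl, _⟩ ⟨rfl, _⟩
    exact hxy rfl

theorem card_eq_add_of_subset {mu lam : YoungDiagram} (h : mu.cells ⊆ lam.cells) :
    lam.cells.card = mu.cells.card + (lam.cells \ mu.cells).card := by
  have := Finset.card_sdiff_add_card_eq_card h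
  omega

/-- Sum of `ℕ` values equal to 1: exactly one summand is 1. -/
theorem sum_nat_eq_one {M : ℕ} {f : ℕ → ℕ} (h : ∑ i ∈ range M, f i = 1) :
    ∃ a < M, f a = 1 ∧ ∀ b, b ≠ a → b < M → f b = 0 := by
  induction M with
  | zero => simp at h
  | succ m ih =>
    rw [Finset.sum_range_succ] at h
    rcases Nat.eq_zero_or_pos (f m) with h0 | h1
    · obtain ⟨a, ha, hfa, hall⟩ := ih (by omega)
      exact ⟨a, by omega, hfa, fun b hb hbm => by
        rcases Nat.lt_succ_iff_lt_or_eq.1 hbm with h' | rfl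
        · exact hall b hb h'
        · exact h0⟩
    · have hfm : f m = 1 := by omega
      have hz : ∑ i ∈ range m, f i = 0 := by omega
      rw [Finset.sum_eq_zero_iff] at hz
      exact ⟨m, by omega, hfm, fun b hb hbm => by
        rcases Nat.lt_succ_iff_lt_or_eq.1 hbm with h' | rfl
        · exact hz b (Finset.mem_range.2 h')
        · omega⟩

end DMN
namespace DMN
open Finset

/-! ### Constructing Young diagrams from row-length functions -/

def ofFn (f : ℕ → ℕ) (hf : ∀ i j, i ≤ j → f j ≤ f i) (N : ℕ) (hN : ∀ i, N ≤ i → f i = 0) :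
    YoungDiagram where
  cells := (range N).biUnion (fun i => {i} ×ˢ range (f i))
  isLowerSet := by
    rintro ⟨i1, j1⟩ ⟨i2, j2⟩ hle hmem
    obtain ⟨h1, h2⟩ : i2 ≤ i1 ∧ j2 ≤ j1 := Prod.le_def.mp hle
    simp only [Finset.coe_biUnion, Finset.coe_singleton, Set.mem_iUnion, Finset.mem_coe,
      Finset.mem_range, Finset.mem_product, Set.mem_singleton_iff, Finset.mem_singleton] at hmem ⊢
    obtain ⟨i, hi, hii, hj⟩ := hmem
    subst hii
    refine ⟨i2, ?_, rfl, ?_⟩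
    · by_contra hc
      have := hN i2 (by omega)
      have := hf i2 i1 h1
      omega
    · have := hf i2 i1 h1
      omega

theorem rowLen_ofFn (f : ℕ → ℕ) (hf : ∀ i j, i ≤ j → f j ≤ f i) (N : ℕ)
    (hN : ∀ i, N ≤ i → f i = 0) (i : ℕ) : (ofFn f hf N hN).rowLen i = f i := by
  have hmem : ∀ j, ((i, j) ∈ ofFn f hf N hN ↔ j < f i) := by
    intro j
    show (i, j) ∈ (range N).biUnion _ ↔ _
    simp only [Finset.mem_biUnion, Finset.mem_range, Finset.mem_product, Finset.mem_singleton]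
    constructor
    · rintro ⟨a, ha, rfl, hj⟩; exact hj
    · intro hj
      refine ⟨i, ?_, rfl, hj⟩
      by_contra hc
      have := hN i (by omega)
      omega
  rcases Nat.eq_zero_or_pos (f i) with h0 | hpos
  · rw [h0]
    by_contra hne
    have : (i, 0) ∈ ofFn f hf N hN := YoungDiagram.mem_iff_lt_rowLen.2 (by omega)
    rw [hmem 0] at this; omega
  · have h1 : (i, f i - 1) ∈ ofFn f hf N hN := (hmem _).2 (by omega)
    have h2 : ¬ (i, f i) ∈ ofFn f hf N hN := fun h => by rw [hmem] at h; omega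
    rw [YoungDiagram.mem_iff_lt_rowLen] at h1 h2
    omega

/-! ### Covers characterization -/

theorem covers_iff {mu lam : YoungDiagram} :
    Covers mu lam ↔ ∃ a, mu.rowLen a + 1 = lam.rowLen a ∧ ∀ i, i ≠ a → mu.rowLen i = lam.rowLen i := by
  constructor
  · rintro ⟨hsub, hcard⟩
    have hle := subset_iff_rowLen.1 hsub
    have hd : (lam.cells \ mu.cells).card = 1 := by
      have := card_eq_add_of_subset hsub; omega
    rw [card_sdiff_eq (le_refl (lam.colLen 0))] at hd
    obtain ⟨a, ha, hfa, hall⟩ := sum_nat_eq_one hd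
    refine ⟨a, by have := hle a; omega, fun i hi => ?_⟩
    by_cases hiM : i < lam.colLen 0
    · have := hall i hi hiM; have := hle i; omega
    · have h0 := rowLen_zero_of_colLen_le lam (not_lt.1 hiM)
      have := hle i; omega
  · rintro ⟨a, ha, hall⟩
    have hle : ∀ i, mu.rowLen i ≤ lam.rowLen i := by
      intro i; by_cases hi : i = a
      · subst hi; omega
      · rw [hall i hi]
    have hsub := subset_iff_rowLen.2 hle
    refine ⟨hsub, ?_⟩
    have hcard := card_eq_add_of_subset hsub
    rw [card_sdiff_eq (le_refl (lam.colLen 0))] at hcard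
    have haM : a < lam.colLen 0 := lt_colLen_of_rowLen_pos lam (by omega)
    have : ∑ i ∈ range (lam.colLen 0), (lam.rowLen i - mu.rowLen i) = 1 := by
      rw [Finset.sum_eq_single a]
      · omega
      · intro b _ hb; rw [hall b hb]; omega
      · intro h; exact absurd (Finset.mem_range.2 haM) h
    omega

theorem sdiff_of_covers {mu lam : YoungDiagram} {a : ℕ}
    (ha : mu.rowLen a + 1 = lam.rowLen a) (hall : ∀ i, i ≠ a → mu.rowLen i = lam.rowLen i) :
    lam.cells \ mu.cells = {(a, mu.rowLen a)} := by
  ext ⟨i, j⟩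
  rw [mem_sdiff_iff, Finset.mem_singleton, Prod.mk.injEq]
  constructor
  · rintro ⟨h1, h2⟩
    by_cases hi : i = a
    · subst hi; exact ⟨rfl, by omega⟩
    · rw [hall i hi] at h1; omega
  · rintro ⟨rfl, rfl⟩; omega

theorem remContent_of_covers {mu lam : YoungDiagram} {a : ℕ}
    (ha : mu.rowLen a + 1 = lam.rowLen a) (hall : ∀ i, i ≠ a → mu.rowLen i = lam.rowLen i) :
    remContent mu lam = (mu.rowLen a : ℤ) - (a : ℤ) := by
  rw [remContent, sdiff_of_covers ha hall, Finset.sum_singleton]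

end DMN
namespace DMN
open Finset

/-! ### The row-level border strip predicate -/

/-- `RSf m f g r t`: the shape with row lengths `g` is obtained from the one with
row lengths `f` by removing a border strip of `m` boxes occupying rows `r..t`. -/
def RSf (m : ℕ) (f g : ℕ → ℕ) (r t : ℕ) : Prop :=
  r ≤ t ∧ (∀ i, i < r → g i = f i) ∧ (∀ i, t < i → g i = f i) ∧
  (∀ i, r ≤ i → i < t → g i + 1 = f (i + 1)) ∧ g t < f t ∧ f r + (t - r) = g t + m

def RS (m : ℕ) (lam mu : YoungDiagram) (r t : ℕ) : Prop :=
  RSf m lam.rowLen mu.rowLen r t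

theorem RSf_congr {m : ℕ} {f g f' g' : ℕ → ℕ} {r t : ℕ} (hf : ∀ i, f i = f' i)
    (hg : ∀ i, g i = g' i) (h : RSf m f g r t) : RSf m f' g' r t := by
  obtain ⟨h1, h2, h3, h4, h5, h6⟩ := h
  refine ⟨h1, fun i hi => ?_, fun i hi => ?_, fun i hi1 hi2 => ?_, ?_, ?_⟩
  · rw [← hf, ← hg]; exact h2 i hi
  · rw [← hf, ← hg]; exact h3 i hi
  · rw [← hf, ← hg]; exact h4 i hi1 hi2
  · rw [← hf, ← hg]; exact h5
  · rw [← hf, ← hg]; exact h6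

section RSfFacts

variable {m : ℕ} {f g : ℕ → ℕ} {r t : ℕ}
variable (hf : ∀ i j, i ≤ j → f j ≤ f i) (hg : ∀ i j, i ≤ j → g j ≤ g i)

include hf in
theorem RSf.occupied (h : RSf m f g r t) : ∀ i, g i < f i ↔ (r ≤ i ∧ i ≤ t) := by
  obtain ⟨h1, h2, h3, h4, h5, h6⟩ := h
  intro i
  constructor
  · intro hlt
    constructor
    · by_contra hc; have := h2 i (by omega); omega
    · by_contra hc; have := h3 i (by omega); omega
  · rintro ⟨hr, ht⟩
    rcases eq_or_lt_of_le ht with rfl | hlt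
    · exact h5
    · have := h4 i hr hlt
      have := hf (i + 1) t (by omega)
      have := hf i (i + 1) (by omega)
      omega

include hf in
theorem RSf.le (h : RSf m f g r t) : ∀ i, g i ≤ f i := by
  intro i
  by_cases hc : r ≤ i ∧ i ≤ t
  · have := (h.occupied hf i).2 hc; omega
  · obtain ⟨h1, h2, h3, h4, h5, h6⟩ := h
    rcases not_and_or.1 hc with hc' | hc'
    · have := h2 i (by omega); omega
    · have := h3 i (by omega); omega

include hf in
theorem RSf_unique (h : RSf m f g r t) {r' t' : ℕ} (h' : RSf m f g r' t') :
    r = r' ∧ t = t' := by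
  have o1 := h.occupied hf
  have o2 := h'.occupied hf
  have e1 := (o2 r).1 ((o1 r).2 ⟨le_refl r, h.1⟩)
  have e2 := (o2 t).1 ((o1 t).2 ⟨h.1, le_refl t⟩)
  have e3 := (o1 r').1 ((o2 r').2 ⟨le_refl r', h'.1⟩)
  have e4 := (o1 t').1 ((o2 t').2 ⟨h'.1, le_refl t'⟩)
  omega

include hf hg in
theorem RSf.telescope (h : RSf m f g r t) :
    ∀ j, r ≤ j → j ≤ t → (∑ i ∈ Finset.Icc j t, (f i - g i)) + g t = f j + (t - j) := by
  obtain ⟨h1, h2, h3, h4, h5, h6⟩ := h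
  suffices H : ∀ n j, r ≤ j → j ≤ t → t - j = n →
      (∑ i ∈ Finset.Icc j t, (f i - g i)) + g t = f j + (t - j) by
    exact fun j hr ht => H (t - j) j hr ht rfl
  intro n
  induction n with
  | zero =>
    intro j hr ht hn
    have : j = t := by omega
    subst this
    rw [Finset.Icc_self, Finset.sum_singleton]
    omega
  | succ n ih =>
    intro j hr ht hn
    have hjt : j < t := by omega
    have hins : Finset.Icc j t = insert j (Finset.Icc (j + 1) t) := by
      ext x
      simp only [Finset.mem_Icc, Finset.mem_insert]
      omega
    rw [hins, Finset.sum_insert (by simp), add_assoc]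
    rw [ih (j + 1) (by omega) (by omega) (by omega)]
    have hi := h4 j hr hjt
    have := hf j (j + 1) (by omega)
    have := hg j t (by omega)
    omega

include hf hg in
theorem RSf.sum_range (h : RSf m f g r t) {M : ℕ} (hM : t < M) :
    (∑ i ∈ Finset.range M, (f i - g i)) = m := by
  have hsub : Finset.Icc r t ⊆ Finset.range M := by
    intro i hi; rw [Finset.mem_Icc] at hi; rw [Finset.mem_range]; omega
  have hzero : ∀ i ∈ Finset.range M, i ∉ Finset.Icc r t → f i - g i = 0 := by
    intro i _ hi
    rw [Finset.mem_Icc] at hi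
    rcases not_and_or.1 hi with hc | hc
    · have := h.2.1 i (by omega); omega
    · have := h.2.2.1 i (by omega); omega
  rw [← Finset.sum_subset hsub hzero]
  have := h.telescope hf hg r (le_refl r) h.1
  have h6 := h.2.2.2.2.2
  have := hg r t h.1
  omega

end RSfFacts

theorem rowLen_anti' (lam : YoungDiagram) : ∀ i j : ℕ, i ≤ j → lam.rowLen j ≤ lam.rowLen i :=
  fun i j h => lam.rowLen_anti i j h

theorem RS.le {m : ℕ} {lam mu : YoungDiagram} {r t : ℕ} (h : RS m lam mu r t) :
    ∀ i, mu.rowLen i ≤ lam.rowLen i := RSf.le (rowLen_anti' lam) h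

theorem RS.card {m : ℕ} {lam mu : YoungDiagram} {r t : ℕ} (h : RS m lam mu r t) :
    lam.cells.card = mu.cells.card + m := by
  have hsub := subset_iff_rowLen.2 h.le
  have hM : lam.colLen 0 ≤ max (lam.colLen 0) (t + 1) := le_max_left _ _
  have := card_sdiff_eq (mu := mu) hM
  have hs := RSf.sum_range (rowLen_anti' lam) (rowLen_anti' mu) h
      (M := max (lam.colLen 0) (t + 1)) (by omega)
  have := card_eq_add_of_subset hsub
  omega

theorem RS.t_lt_colLen {m : ℕ} {lam mu : YoungDiagram} {r t : ℕ} (h : RS m lam mu r t) :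
    t < lam.colLen 0 :=
  lt_colLen_of_rowLen_pos lam (by have := h.2.2.2.2.1; omega)

end DMN
namespace DMN
open Finset

/-! ### Border strip geometry -/

theorem cellAdj_symm {a b : ℕ × ℕ} (h : CellAdj a b) : CellAdj b a := by
  rcases h with ⟨h1, h2⟩ | ⟨h1, h2⟩
  · exact Or.inl ⟨h1.symm, h2.symm⟩
  · exact Or.inr ⟨h1.symm, h2.symm⟩

/-- The step relation in the border strip definition. -/
def Rel (D : Finset (ℕ × ℕ)) (x y : ℕ × ℕ) : Prop := x ∈ D ∧ y ∈ D ∧ CellAdj x y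

theorem rel_symm (D : Finset (ℕ × ℕ)) : Symmetric (Rel D) :=
  fun _ _ ⟨h1, h2, h3⟩ => ⟨h2, h1, cellAdj_symm h3⟩

theorem rtg_symm {D : Finset (ℕ × ℕ)} {x y : ℕ × ℕ}
    (h : Relation.ReflTransGen (Rel D) x y) : Relation.ReflTransGen (Rel D) y x :=
  by
    induction h with
    | refl => exact Relation.ReflTransGen.refl
    | tail _ hab ih => exact Relation.ReflTransGen.head (rel_symm D hab) ih

/-- Walk right along a row. -/
theorem row_path (D : Finset (ℕ × ℕ)) (i j : ℕ) :
    ∀ d : ℕ, (∀ x, j ≤ x → x ≤ j + d → (i, x) ∈ D) →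
      Relation.ReflTransGen (Rel D) (i, j) (i, j + d) := by
  intro d
  induction d with
  | zero => intro _; simpa using Relation.ReflTransGen.refl
  | succ n ih =>
    intro h
    refine Relation.ReflTransGen.tail (ih fun x h1 h2 => h x h1 (by omega)) ?_
    refine ⟨h _ (by omega) (by omega), h _ (by omega) (by omega), Or.inl ⟨rfl, Or.inl rfl⟩⟩

/-- Connect two cells in the same row when the whole segment is in `D`. -/
theorem row_conn (D : Finset (ℕ × ℕ)) {i j j' : ℕ}
    (h : ∀ x, min j j' ≤ x → x ≤ max j j' → (i, x) ∈ D) :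
    Relation.ReflTransGen (Rel D) (i, j) (i, j') := by
  rcases le_total j j' with hle | hle
  · have := row_path D i j (j' - j) (by intro x h1 h2; exact h x (by omega) (by omega))
    rwa [show j + (j' - j) = j' by omega] at this
  · have := row_path D i j' (j - j') (by intro x h1 h2; exact h x (by omega) (by omega))
    rw [show j' + (j - j') = j by omega] at this
    exact rtg_symm this

/-- Discrete IVT: a path visits every row between its endpoints' rows. -/
theorem rtg_row_ivt {D : Finset (ℕ × ℕ)} {c c' : ℕ × ℕ}
    (h : Relation.ReflTransGen (Rel D) c c') (hc : c ∈ D) :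
    ∀ i, c.1 ≤ i → i ≤ c'.1 → ∃ d ∈ D, d.1 = i := by
  induction h with
  | refl => intro i h1 h2; exact ⟨c, hc, by omega⟩
  | tail _ hstep ih =>
    rename_i b c'' _
    intro i h1 h2
    by_cases hb : i ≤ b.1
    · exact ih i h1 hb
    · have hdiff : c''.1 ≤ b.1 + 1 := by
        rcases hstep.2.2 with ⟨he, _⟩ | ⟨_, he | he⟩ <;> omega
      have : i = c''.1 := by omega
      exact ⟨c'', hstep.2.1, this.symm⟩

/-- A path crossing from a row `> i` to a row `≤ i` contains a vertical step. -/
theorem rtg_cross {D : Finset (ℕ × ℕ)} {c c' : ℕ × ℕ}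
    (h : Relation.ReflTransGen (Rel D) c c') :
    ∀ i, i < c.1 → c'.1 ≤ i → ∃ j, (i, j) ∈ D ∧ (i + 1, j) ∈ D := by
  induction h with
  | refl => intro i h1 h2; omega
  | tail _ hstep ih =>
    rename_i b c'' _
    intro i h1 h2
    by_cases hb : b.1 ≤ i
    · exact ih i h1 hb
    · -- step from b (row > i) to c'' (row ≤ i): must be vertical with b.1 = i+1
      obtain ⟨hbD, hcD, hadj⟩ := hstep
      rcases hadj with ⟨he, _⟩ | ⟨he, hor | hor⟩
      · omega
      · omega
      · have hb1 : b.1 = i + 1 := by omega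
        have hc1 : c''.1 = i := by omega
        refine ⟨c''.2, ?_, ?_⟩
        · rw [← hc1]; exact hcD
        · have : (i + 1, c''.2) = b := by
            rw [← hb1, ← he]
          rw [this]; exact hbD
section StripChar

variable {m : ℕ} {lam mu : YoungDiagram} {r t : ℕ}

theorem RS.conn (h : RS m lam mu r t) :
    ∀ n i j, r ≤ i → i ≤ t → t - i = n → mu.rowLen i ≤ j → j < lam.rowLen i →
      Relation.ReflTransGen (Rel (lam.cells \ mu.cells)) (i, j) (t, mu.rowLen t) := by
  obtain ⟨h1, h2, h3, h4, h5, h6⟩ := h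
  have hrowD : ∀ i j, mu.rowLen i ≤ j → j < lam.rowLen i → (i, j) ∈ lam.cells \ mu.cells :=
    fun i j hj hj' => mem_sdiff_iff.2 ⟨hj, hj'⟩
  intro n
  induction n with
  | zero =>
    intro i j hr ht hn hj hj'
    have : i = t := by omega
    subst this
    exact row_conn _ (fun x h1 h2 => hrowD i x (by omega) (by omega))
  | succ n ih =>
    intro i j hr ht hn hj hj'
    have hit : i < t := by omega
    have hint := h4 i hr hit
    have hocc : mu.rowLen i < lam.rowLen i := by
      have := lam.rowLen_anti i (i + 1) (by omega); omega
    -- connect (i,j) to (i, mu.rowLen i)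
    have s1 : Relation.ReflTransGen (Rel (lam.cells \ mu.cells)) (i, j) (i, mu.rowLen i) :=
      row_conn _ (fun x hx1 hx2 => hrowD i x (by omega) (by omega))
    -- vertical step down to (i+1, mu.rowLen i)
    have hbelow : (i + 1, mu.rowLen i) ∈ lam.cells \ mu.cells := by
      apply hrowD
      · have := mu.rowLen_anti i (i + 1) (by omega); omega
      · omega
    have s2 : Relation.ReflTransGen (Rel (lam.cells \ mu.cells)) (i, mu.rowLen i)
        (i + 1, mu.rowLen i) :=
      Relation.ReflTransGen.single
        ⟨hrowD i _ (le_refl _) hocc, hbelow, Or.inr ⟨rfl, Or.inl rfl⟩⟩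
    have s3 := ih (i + 1) (mu.rowLen i) (by omega) (by omega) (by omega)
      (by have := mu.rowLen_anti i (i + 1) (by omega); omega) (by omega)
    exact (s1.trans s2).trans s3

theorem RS.borderStrip (h : RS m lam mu r t) : IsBorderStrip (lam.cells \ mu.cells) := by
  have hocc := RSf.occupied (rowLen_anti' lam) h
  refine ⟨⟨(t, mu.rowLen t), mem_sdiff_iff.2 ⟨le_refl _, h.2.2.2.2.1⟩⟩, ?_, ?_⟩
  · rintro c hc c' hc'
    obtain ⟨i, j⟩ := c
    obtain ⟨i', j'⟩ := c'
    rw [mem_sdiff_iff] at hc hc'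
    have hi : r ≤ i ∧ i ≤ t := (hocc i).1 (by omega)
    have hi' : r ≤ i' ∧ i' ≤ t := (hocc i').1 (by omega)
    exact (h.conn (t - i) i j hi.1 hi.2 rfl hc.1 hc.2).trans
      (rtg_symm (h.conn (t - i') i' j' hi'.1 hi'.2 rfl hc'.1 hc'.2))
  · intro i j hij hij'
    rw [mem_sdiff_iff] at hij hij'
    have h1 : r ≤ i ∧ i ≤ t := (hocc i).1 (by omega)
    have h2 : r ≤ i + 1 ∧ i + 1 ≤ t := (hocc (i + 1)).1 (by omega)
    have := h.2.2.2.1 i h1.1 (by omega)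
    omega

theorem RS.ht_eq (h : RS m lam mu r t) : stripHt (lam.cells \ mu.cells) = t - r + 1 := by
  have hocc := RSf.occupied (rowLen_anti' lam) h
  have himg : (lam.cells \ mu.cells).image Prod.fst = Finset.Icc r t := by
    ext i
    simp only [Finset.mem_image, Finset.mem_Icc]
    constructor
    · rintro ⟨⟨a, b⟩, hab, rfl⟩
      rw [mem_sdiff_iff] at hab
      exact (hocc a).1 (by omega)
    · intro hi
      have := (hocc i).2 hi
      exact ⟨(i, mu.rowLen i), mem_sdiff_iff.2 ⟨le_refl _, this⟩, rfl⟩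
  have : stripHt (lam.cells \ mu.cells) = (Finset.Icc r t).card := by
    rw [stripHt, himg]
  rw [this, Nat.card_Icc]
  have := h.1
  omega

/-- Forward direction: `RS` data yields the border-strip statement. -/
theorem RS.char (h : RS m lam mu r t) :
    mu.cells ⊆ lam.cells ∧ lam.cells.card = mu.cells.card + m ∧
      IsBorderStrip (lam.cells \ mu.cells) ∧ _root_.stripHt (lam.cells \ mu.cells) = t - r + 1 :=
  ⟨subset_iff_rowLen.2 h.le, h.card, h.borderStrip, h.ht_eq⟩

/-- Backward direction: the border-strip statement yields `RS` data. -/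
theorem RS.of_borderStrip {m : ℕ} {lam mu : YoungDiagram}
    (hsub : mu.cells ⊆ lam.cells) (hcard : lam.cells.card = mu.cells.card + m)
    (hbs : IsBorderStrip (lam.cells \ mu.cells)) :
    ∃ r' t', RS m lam mu r' t' := by
  obtain ⟨hne, hconn, h22⟩ := hbs
  have hle := subset_iff_rowLen.1 hsub
  set D := lam.cells \ mu.cells with hD
  -- the occupied rows
  have himg : (D.image Prod.fst).Nonempty := hne.image _
  set r := (D.image Prod.fst).min' himg with hr
  set t := (D.image Prod.fst).max' himg with ht
  have hmemr : r ∈ D.image Prod.fst := Finset.min'_mem _ _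
  have hmemt : t ∈ D.image Prod.fst := Finset.max'_mem _ _
  have hoccr : mu.rowLen r < lam.rowLen r := by
    obtain ⟨⟨a, b⟩, hab, h'⟩ := Finset.mem_image.1 hmemr
    rw [hD, mem_sdiff_iff] at hab
    subst h'; omega
  have hocct : mu.rowLen t < lam.rowLen t := by
    obtain ⟨⟨a, b⟩, hab, h'⟩ := Finset.mem_image.1 hmemt
    rw [hD, mem_sdiff_iff] at hab
    subst h'; omega
  have hrt : r ≤ t := Finset.min'_le _ t hmemt
  -- rows outside [r, t] are equal
  have hout : ∀ i, (i < r ∨ t < i) → mu.rowLen i = lam.rowLen i := by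
    intro i hi
    by_contra hc
    have : i ∈ D.image Prod.fst :=
      Finset.mem_image.2 ⟨(i, mu.rowLen i),
        by rw [hD, mem_sdiff_iff]; have := hle i; omega, rfl⟩
    rcases hi with hi | hi
    · have := Finset.min'_le _ _ this; omega
    · have := Finset.le_max' _ _ this; omega
  -- every row in [r, t] is occupied
  have hocc : ∀ i, r ≤ i → i ≤ t → mu.rowLen i < lam.rowLen i := by
    intro i hri hit
    obtain ⟨⟨ta, tb⟩, htab, ht'⟩ := Finset.mem_image.1 hmemt
    obtain ⟨⟨ra, rb⟩, hrab, hr'⟩ := Finset.mem_image.1 hmemr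
    have hpath := hconn (ra, rb) hrab (ta, tb) htab
    obtain ⟨⟨di, dj⟩, hd, hd1⟩ := rtg_row_ivt hpath hrab i (by omega) (by omega)
    rw [hD, mem_sdiff_iff] at hd
    have hdi : di = i := hd1
    subst hdi
    omega
  -- interior relation
  have hint : ∀ i, r ≤ i → i < t → mu.rowLen i + 1 = lam.rowLen (i + 1) := by
    intro i hri hit
    have hocc1 := hocc i hri (by omega)
    have hocc2 := hocc (i + 1) (by omega) hit
    -- ≥ : no 2x2
    have hge : lam.rowLen (i + 1) ≤ mu.rowLen i + 1 := by
      by_contra hc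
      apply h22 i (mu.rowLen i)
      · rw [hD, mem_sdiff_iff]; omega
      · rw [hD, mem_sdiff_iff]
        have := mu.rowLen_anti i (i + 1) (by omega)
        omega
    -- ≤ : connectivity across rows i, i+1
    have hlt : mu.rowLen i < lam.rowLen (i + 1) := by
      by_contra hc
      push_neg at hc
      -- no vertical adjacency possible between rows i and i+1
      obtain ⟨⟨ta, tb⟩, htab, ht'⟩ := Finset.mem_image.1 hmemt
      have hcell : (r, mu.rowLen r) ∈ D := by rw [hD, mem_sdiff_iff]; omega
      have hpath := hconn (ta, tb) htab (r, mu.rowLen r) hcell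
      obtain ⟨j, hj1, hj2⟩ := rtg_cross hpath i (by omega) (by omega)
      rw [hD, mem_sdiff_iff] at hj1 hj2
      omega
    omega
  refine ⟨r, t, hrt, fun i hi => hout i (Or.inl hi), fun i hi => hout i (Or.inr hi),
    hint, hocct, ?_⟩
  -- the size condition via the card computation
  have hM : lam.colLen 0 ≤ max (lam.colLen 0) (t + 1) := le_max_left _ _
  have hcs := card_sdiff_eq (mu := mu) hM
  have hcc := card_eq_add_of_subset hsub
  set M := max (lam.colLen 0) (t + 1) with hMdef
  have hge : mu.rowLen t ≤ lam.rowLen r + (t - r) := by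
    have h1 := mu.rowLen_anti r t hrt
    have h2 := hocc r (le_refl r) hrt
    omega
  have hRS : RSf (lam.rowLen r + (t - r) - mu.rowLen t) lam.rowLen mu.rowLen r t :=
    ⟨hrt, fun i hi => hout i (Or.inl hi), fun i hi => hout i (Or.inr hi),
      hint, hocct, by omega⟩
  have hsr := RSf.sum_range (rowLen_anti' lam) (rowLen_anti' mu) hRS (M := M) (by omega)
  rw [← hD] at hcs
  have e1 : D.card = m := by
    rw [hD]
    omega
  rw [hcs] at e1
  rw [hsr] at e1
  omega

end StripChar
/-! ### Adding/removing single boxes at a given row -/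

/-- Row function of `lam` with row `a` decremented (clamped to stay a partition). -/
def decF (lam : YoungDiagram) (a : ℕ) : ℕ → ℕ :=
  fun i => if i = a then max (lam.rowLen a - 1) (lam.rowLen (a + 1)) else lam.rowLen i

theorem decF_anti (lam : YoungDiagram) (a : ℕ) : ∀ i j, i ≤ j → decF lam a j ≤ decF lam a i := by
  intro i j hij
  unfold decF
  by_cases h1 : j = a <;> by_cases h2 : i = a
  · rw [h1, h2]
  · rw [if_pos h1, if_neg h2]
    have h3 := lam.rowLen_anti i a (by omega)
    have h4 := lam.rowLen_anti i (a + 1) (by omega)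
    omega
  · rw [if_neg h1, if_pos h2]
    have h3 := lam.rowLen_anti (a + 1) j (by omega)
    omega
  · rw [if_neg h1, if_neg h2]
    exact lam.rowLen_anti i j hij

theorem decF_zero (lam : YoungDiagram) (a : ℕ) :
    ∀ i, lam.colLen 0 + a + 1 ≤ i → decF lam a i = 0 := by
  intro i hi
  unfold decF
  have h1 := rowLen_zero_of_colLen_le lam (show lam.colLen 0 ≤ i by omega)
  split_ifs with h
  · omega
  · exact h1

def decYD (lam : YoungDiagram) (a : ℕ) : YoungDiagram :=
  ofFn (decF lam a) (decF_anti lam a) (lam.colLen 0 + a + 1) (decF_zero lam a)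

theorem rowLen_decYD (lam : YoungDiagram) (a : ℕ) (i : ℕ) :
    (decYD lam a).rowLen i = if i = a then max (lam.rowLen a - 1) (lam.rowLen (a + 1))
      else lam.rowLen i :=
  rowLen_ofFn _ _ _ _ i

/-- `canDec lam a`: a box can be removed from `lam` at the end of row `a`. -/
def canDec (lam : YoungDiagram) (a : ℕ) : Prop := lam.rowLen (a + 1) < lam.rowLen a

instance (lam : YoungDiagram) (a : ℕ) : Decidable (canDec lam a) := by
  unfold canDec; infer_instance

theorem rowLen_decYD_of_canDec {lam : YoungDiagram} {a : ℕ} (h : canDec lam a) (i : ℕ) :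
    (decYD lam a).rowLen i = if i = a then lam.rowLen a - 1 else lam.rowLen i := by
  rw [rowLen_decYD]
  unfold canDec at h
  split_ifs <;> omega

theorem covers_decYD {lam : YoungDiagram} {a : ℕ} (h : canDec lam a) :
    Covers (decYD lam a) lam := by
  rw [covers_iff]
  refine ⟨a, ?_, fun i hi => ?_⟩
  · rw [rowLen_decYD_of_canDec h a, if_pos rfl]
    unfold canDec at h
    omega
  · rw [rowLen_decYD_of_canDec h i, if_neg hi]

/-- Row function of `mu` with row `a` incremented (clamped to stay a partition). -/
def incF (mu : YoungDiagram) (a : ℕ) : ℕ → ℕ :=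
  fun i => if i = a then
    (if a = 0 then mu.rowLen 0 + 1 else min (mu.rowLen a + 1) (mu.rowLen (a - 1)))
    else mu.rowLen i

theorem incF_anti (mu : YoungDiagram) (a : ℕ) : ∀ i j, i ≤ j → incF mu a j ≤ incF mu a i := by
  intro i j hij
  unfold incF
  by_cases h1 : j = a <;> by_cases h2 : i = a
  · rw [h1, h2]
  · rw [if_pos h1, if_neg h2]
    have ha : a ≠ 0 := by omega
    rw [if_neg ha]
    have h3 := mu.rowLen_anti i (a - 1) (by omega)
    omega
  · rw [if_neg h1, if_pos h2]
    have h3 := mu.rowLen_anti a j (by omega)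
    have h4 := mu.rowLen_anti (a - 1) j (by omega)
    by_cases ha : a = 0
    · rw [if_pos ha]
      rw [ha] at h3
      omega
    · rw [if_neg ha]
      omega
  · rw [if_neg h1, if_neg h2]
    exact mu.rowLen_anti i j hij

theorem incF_zero (mu : YoungDiagram) (a : ℕ) :
    ∀ i, mu.colLen 0 + a + 1 ≤ i → incF mu a i = 0 := by
  intro i hi
  unfold incF
  have h1 := rowLen_zero_of_colLen_le mu (show mu.colLen 0 ≤ i by omega)
  split_ifs with h h'
  · omega
  · omega
  · exact h1

def incYD (mu : YoungDiagram) (a : ℕ) : YoungDiagram :=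
  ofFn (incF mu a) (incF_anti mu a) (mu.colLen 0 + a + 1) (incF_zero mu a)

/-- `canInc mu a`: a box can be added to `mu` at the end of row `a`. -/
def canInc (mu : YoungDiagram) (a : ℕ) : Prop := a = 0 ∨ mu.rowLen a < mu.rowLen (a - 1)

instance (mu : YoungDiagram) (a : ℕ) : Decidable (canInc mu a) := by
  unfold canInc; infer_instance

theorem rowLen_incYD_of_canInc {mu : YoungDiagram} {a : ℕ} (h : canInc mu a) (i : ℕ) :
    (incYD mu a).rowLen i = if i = a then mu.rowLen a + 1 else mu.rowLen i := by
  rw [show (incYD mu a).rowLen i = incF mu a i from rowLen_ofFn _ _ _ _ i]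
  unfold incF
  by_cases h1 : i = a
  · rw [if_pos h1, if_pos h1]
    by_cases h0 : a = 0
    · rw [if_pos h0]; rw [h0]
    · rw [if_neg h0]
      rcases h with h | h
      · exact absurd h h0
      · omega
  · rw [if_neg h1, if_neg h1]

theorem covers_incYD {mu : YoungDiagram} {a : ℕ} (h : canInc mu a) :
    Covers mu (incYD mu a) := by
  rw [covers_iff]
  refine ⟨a, ?_, fun i hi => ?_⟩
  · rw [rowLen_incYD_of_canInc h a, if_pos rfl]
  · rw [rowLen_incYD_of_canInc h i, if_neg hi]
/-! ### The partner lemmas for the commutator computation -/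

/-- Row function after removing a box in row `a` (valid when `canDec`). -/
def dF (lam : YoungDiagram) (a : ℕ) : ℕ → ℕ :=
  fun i => if i = a then lam.rowLen a - 1 else lam.rowLen i

/-- Row function after adding a box in row `a` (valid when `canInc`). -/
def iF (mu : YoungDiagram) (a : ℕ) : ℕ → ℕ :=
  fun i => if i = a then mu.rowLen a + 1 else mu.rowLen i

theorem dF_self (lam : YoungDiagram) (a : ℕ) : dF lam a a = lam.rowLen a - 1 := if_pos rfl

theorem dF_ne (lam : YoungDiagram) {i a : ℕ} (h : i ≠ a) : dF lam a i = lam.rowLen i := if_neg h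

theorem iF_self (mu : YoungDiagram) (a : ℕ) : iF mu a a = mu.rowLen a + 1 := if_pos rfl

theorem iF_ne (mu : YoungDiagram) {i a : ℕ} (h : i ≠ a) : iF mu a i = mu.rowLen i := if_neg h

theorem RS_dec_iff {lam mu : YoungDiagram} {k a r t : ℕ} (h : canDec lam a) :
    RS k (decYD lam a) mu r t ↔ RSf k (dF lam a) mu.rowLen r t := by
  constructor
  · intro h'
    exact RSf_congr (f := (decYD lam a).rowLen)
      (fun i => by rw [rowLen_decYD_of_canDec h i]; rfl) (fun i => rfl) h'
  · intro h'
    exact RSf_congr (f := dF lam a)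
      (fun i => by rw [rowLen_decYD_of_canDec h i]; rfl) (fun i => rfl) h'

theorem RS_inc_iff {lam mu : YoungDiagram} {k a r t : ℕ} (h : canInc mu a) :
    RS k lam (incYD mu a) r t ↔ RSf k lam.rowLen (iF mu a) r t := by
  constructor
  · intro h'
    exact RSf_congr (g := (incYD mu a).rowLen) (fun i => rfl)
      (fun i => by rw [rowLen_incYD_of_canInc h i]; rfl) h'
  · intro h'
    exact RSf_congr (g := iF mu a) (fun i => rfl)
      (fun i => by rw [rowLen_incYD_of_canInc h i]; rfl) h'

section Partner

variable {lam mu : YoungDiagram} {k a r t : ℕ}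

/-- Out-flavor, direction 1 → 2. -/
theorem P1out (hcd : canDec lam a) (h : RSf k (dF lam a) mu.rowLen r t)
    (hout : ¬(r ≤ a ∧ a ≤ t)) (hnB : ¬(a = t + 1 ∧ mu.rowLen t + 1 = lam.rowLen (t + 1))) :
    canInc mu a ∧ RSf k lam.rowLen (iF mu a) r t ∧ mu.rowLen a + 1 = lam.rowLen a := by
  obtain ⟨hrt, hlo, hhi, hint, hlast, hsum⟩ := h
  unfold canDec at hcd
  have hmua : mu.rowLen a + 1 = lam.rowLen a := by
    rcases not_and_or.1 hout with hc | hc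
    · have h1 := hlo a (by omega)
      rw [dF_self] at h1
      omega
    · have h1 := hhi a (by omega)
      rw [dF_self] at h1
      omega
  have hci : canInc mu a := by
    rcases Nat.eq_zero_or_pos a with rfl | hapos
    · exact Or.inl rfl
    · right
      by_cases hat : a = t + 1
      · subst hat
        have h1 := mu.rowLen_anti t (t + 1) (by omega)
        have h2 : ¬mu.rowLen t + 1 = lam.rowLen (t + 1) := fun hc => hnB ⟨rfl, hc⟩
        show mu.rowLen (t + 1) < mu.rowLen (t + 1 - 1)
        have he : t + 1 - 1 = t := rfl
        rw [he]
        omega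
      · rcases not_and_or.1 hout with hc | hc
        · have h1 := hlo (a - 1) (by omega)
          rw [dF_ne lam (by omega)] at h1
          have h2 := lam.rowLen_anti (a - 1) a (by omega)
          omega
        · have h1 := hhi (a - 1) (by omega)
          rw [dF_ne lam (by omega)] at h1
          have h2 := lam.rowLen_anti (a - 1) a (by omega)
          omega
  have hta : t ≠ a := by omega
  have hra : r ≠ a := by omega
  refine ⟨hci, ⟨hrt, ?_, ?_, ?_, ?_, ?_⟩, hmua⟩
  · intro i hi
    by_cases hia : i = a
    · subst hia
      rw [iF_self]
      omega
    · rw [iF_ne mu hia]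
      have h1 := hlo i hi
      rw [dF_ne lam hia] at h1
      exact h1
  · intro i hi
    by_cases hia : i = a
    · subst hia
      rw [iF_self]
      omega
    · rw [iF_ne mu hia]
      have h1 := hhi i hi
      rw [dF_ne lam hia] at h1
      exact h1
  · intro i hi1 hi2
    have hia : i ≠ a := by omega
    have hia1 : i + 1 ≠ a := by omega
    rw [iF_ne mu hia]
    have h1 := hint i hi1 hi2
    rw [dF_ne lam hia1] at h1
    exact h1
  · rw [iF_ne mu hta]
    have := hlast
    rw [dF_ne lam hta] at this
    exact this
  · rw [iF_ne mu hta]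
    have := hsum
    rw [dF_ne lam hra] at this
    exact this

/-- Out-flavor, direction 2 → 1. -/
theorem P2out (hci : canInc mu a) (h : RSf k lam.rowLen (iF mu a) r t)
    (hout : ¬(r ≤ a ∧ a ≤ t)) (hnA' : ¬(a + 1 = r ∧ lam.rowLen a = lam.rowLen (a + 1))) :
    canDec lam a ∧ RSf k (dF lam a) mu.rowLen r t ∧
      ¬(a = t + 1 ∧ mu.rowLen t + 1 = lam.rowLen (t + 1)) ∧
      mu.rowLen a + 1 = lam.rowLen a := by
  obtain ⟨hrt, hlo, hhi, hint, hlast, hsum⟩ := h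
  have hmua : mu.rowLen a + 1 = lam.rowLen a := by
    rcases not_and_or.1 hout with hc | hc
    · have h1 := hlo a (by omega)
      rw [iF_self] at h1
      omega
    · have h1 := hhi a (by omega)
      rw [iF_self] at h1
      omega
  have hcd : canDec lam a := by
    unfold canDec
    by_cases har : a + 1 = r
    · have h1 := lam.rowLen_anti a (a + 1) (by omega)
      have h2 : lam.rowLen a ≠ lam.rowLen (a + 1) := fun hc => hnA' ⟨har, hc⟩
      omega
    · by_cases hin : r ≤ a + 1 ∧ a + 1 ≤ t
      · -- a + 1 ∈ [r, t], a ∉ [r, t], a+1 ≠ r impossible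
        omega
      · -- a + 1 outside [r, t]
        rcases not_and_or.1 hin with hc | hc
        · -- a + 1 < r, so a + 1 ≠ a
          have h1 := hlo (a + 1) (by omega)
          rw [iF_ne mu (by omega)] at h1
          have h2 := mu.rowLen_anti a (a + 1) (by omega)
          omega
        · have h1 := hhi (a + 1) (by omega)
          rw [iF_ne mu (by omega)] at h1
          have h2 := mu.rowLen_anti a (a + 1) (by omega)
          omega
  have hta : t ≠ a := by omega
  have hra : r ≠ a := by omega
  have hnB : ¬(a = t + 1 ∧ mu.rowLen t + 1 = lam.rowLen (t + 1)) := by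
    rintro ⟨rfl, hc⟩
    -- a = t + 1; canInc says mu.rowLen t > mu.rowLen (t+1); hmua : μ(t+1) + 1 = λ(t+1)
    rcases hci with h0 | hlt
    · omega
    · have he : t + 1 - 1 = t := rfl
      rw [he] at hlt
      omega
  refine ⟨hcd, ⟨hrt, ?_, ?_, ?_, ?_, ?_⟩, hnB, hmua⟩
  · intro i hi
    by_cases hia : i = a
    · subst hia
      rw [dF_self]
      omega
    · rw [dF_ne lam hia]
      have h1 := hlo i hi
      rw [iF_ne mu hia] at h1
      exact h1
  · intro i hi
    by_cases hia : i = a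
    · subst hia
      rw [dF_self]
      omega
    · rw [dF_ne lam hia]
      have h1 := hhi i hi
      rw [iF_ne mu hia] at h1
      exact h1
  · intro i hi1 hi2
    have hia : i ≠ a := by omega
    have hia1 : i + 1 ≠ a := by omega
    rw [dF_ne lam hia1]
    have h1 := hint i hi1 hi2
    rw [iF_ne mu hia] at h1
    exact h1
  · rw [dF_ne lam hta]
    have h1 := hlast
    rw [iF_ne mu hta] at h1
    exact h1
  · rw [dF_ne lam hra]
    have h1 := hsum
    rw [iF_ne mu hta] at h1
    exact h1

end Partner
section Partner2

variable {lam mu : YoungDiagram} {k a r t : ℕ}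

/-- In-flavor, direction 1 → 2. -/
theorem P1in (hcd : canDec lam (a + 1)) (h : RSf k (dF lam (a + 1)) mu.rowLen r t)
    (hin : r ≤ a ∧ a < t) :
    canInc mu a ∧ RSf k lam.rowLen (iF mu a) r t ∧ lam.rowLen (a + 1) = mu.rowLen a + 2 := by
  obtain ⟨hrt, hlo, hhi, hint, hlast, hsum⟩ := h
  unfold canDec at hcd
  have hintA := hint a hin.1 hin.2
  rw [dF_self] at hintA
  have hval : lam.rowLen (a + 1) = mu.rowLen a + 2 := by omega
  have hci : canInc mu a := by
    rcases Nat.eq_zero_or_pos a with rfl | hapos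
    · exact Or.inl rfl
    · right
      by_cases har : r ≤ a - 1
      · have h1 := hint (a - 1) har (by omega)
        rw [dF_ne lam (by omega), show a - 1 + 1 = a by omega] at h1
        have h2 := lam.rowLen_anti a (a + 1) (by omega)
        omega
      · have h1 := hlo (a - 1) (by omega)
        rw [dF_ne lam (by omega)] at h1
        have h2 := lam.rowLen_anti (a - 1) (a + 1) (by omega)
        omega
  refine ⟨hci, ⟨hrt, ?_, ?_, ?_, ?_, ?_⟩, hval⟩
  · intro i hi
    have h1 := hlo i hi
    rw [dF_ne lam (by omega)] at h1
    rw [iF_ne mu (by omega)]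
    exact h1
  · intro i hi
    have h1 := hhi i hi
    rw [dF_ne lam (by omega)] at h1
    rw [iF_ne mu (by omega)]
    exact h1
  · intro i hi1 hi2
    by_cases hia : i = a
    · subst hia
      rw [iF_self]
      omega
    · rw [iF_ne mu hia]
      have h1 := hint i hi1 hi2
      rw [dF_ne lam (by omega)] at h1
      exact h1
  · rw [iF_ne mu (by omega)]
    by_cases hta : t = a + 1
    · rw [hta]
      have h1 := hlast
      rw [hta, dF_self] at h1
      omega
    · have h1 := hlast
      rw [dF_ne lam hta] at h1
      exact h1
  · rw [iF_ne mu (by omega)]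
    have h1 := hsum
    rw [dF_ne lam (by omega)] at h1
    exact h1

/-- In-flavor, direction 2 → 1. -/
theorem P2in (hci : canInc mu a) (h : RSf k lam.rowLen (iF mu a) r t)
    (hin : r ≤ a ∧ a < t) :
    canDec lam (a + 1) ∧ RSf k (dF lam (a + 1)) mu.rowLen r t ∧
      lam.rowLen (a + 1) = mu.rowLen a + 2 := by
  obtain ⟨hrt, hlo, hhi, hint, hlast, hsum⟩ := h
  have hintA := hint a hin.1 hin.2
  rw [iF_self] at hintA
  have hval : lam.rowLen (a + 1) = mu.rowLen a + 2 := by omega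
  have hcd : canDec lam (a + 1) := by
    unfold canDec
    by_cases hat : a + 1 < t
    · have h1 := hint (a + 1) (by omega) hat
      rw [iF_ne mu (by omega)] at h1
      have h2 := mu.rowLen_anti a (a + 1) (by omega)
      omega
    · have hteq : t = a + 1 := by omega
      have h1 := hhi (t + 1) (by omega)
      rw [iF_ne mu (by omega)] at h1
      have h2 := hlast
      rw [iF_ne mu (by omega)] at h2
      have h3 := mu.rowLen_anti t (t + 1) (by omega)
      rw [hteq] at h1 h2 h3
      omega
  refine ⟨hcd, ⟨hrt, ?_, ?_, ?_, ?_, ?_⟩, hval⟩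
  · intro i hi
    have h1 := hlo i hi
    rw [iF_ne mu (by omega)] at h1
    rw [dF_ne lam (by omega)]
    exact h1
  · intro i hi
    have h1 := hhi i hi
    rw [iF_ne mu (by omega)] at h1
    rw [dF_ne lam (by omega)]
    exact h1
  · intro i hi1 hi2
    by_cases hia : i = a
    · subst hia
      rw [dF_self]
      omega
    · have h1 := hint i hi1 hi2
      rw [iF_ne mu hia] at h1
      rw [dF_ne lam (by omega)]
      exact h1
  · by_cases hta : t = a + 1
    · rw [hta, dF_self]
      have h2 := mu.rowLen_anti a t (by omega)
      rw [hta] at h2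
      omega
    · rw [dF_ne lam hta]
      have h1 := hlast
      rw [iF_ne mu (by omega)] at h1
      exact h1
  · rw [dF_ne lam (by omega)]
    have h1 := hsum
    rw [iF_ne mu (by omega)] at h1
    exact h1

/-- Chain A (box at head row), direction 1 → big strip. -/
theorem P1A (hcd : canDec lam r) (h : RSf k (dF lam r) mu.rowLen r t) :
    RSf (k + 1) lam.rowLen mu.rowLen r t := by
  obtain ⟨hrt, hlo, hhi, hint, hlast, hsum⟩ := h
  unfold canDec at hcd
  refine ⟨hrt, ?_, ?_, ?_, ?_, ?_⟩
  · intro i hi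
    have h1 := hlo i hi
    rw [dF_ne lam (by omega)] at h1
    exact h1
  · intro i hi
    have h1 := hhi i hi
    rw [dF_ne lam (by omega)] at h1
    exact h1
  · intro i hi1 hi2
    have h1 := hint i hi1 hi2
    rw [dF_ne lam (by omega)] at h1
    exact h1
  · by_cases htr : t = r
    · rw [htr]
      have h1 := hlast
      rw [htr, dF_self] at h1
      omega
    · have h1 := hlast
      rw [dF_ne lam htr] at h1
      exact h1
  · have h1 := hsum
    rw [dF_self] at h1
    omega

/-- Chain A, direction big strip → 1. -/
theorem P1A' (h : RSf (k + 1) lam.rowLen mu.rowLen r t) (hh : lam.rowLen (r + 1) < lam.rowLen r)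
    (hk : 1 ≤ k) : canDec lam r ∧ RSf k (dF lam r) mu.rowLen r t := by
  obtain ⟨hrt, hlo, hhi, hint, hlast, hsum⟩ := h
  refine ⟨hh, hrt, ?_, ?_, ?_, ?_, ?_⟩
  · intro i hi
    rw [dF_ne lam (by omega)]
    exact hlo i hi
  · intro i hi
    rw [dF_ne lam (by omega)]
    exact hhi i hi
  · intro i hi1 hi2
    rw [dF_ne lam (by omega)]
    exact hint i hi1 hi2
  · by_cases htr : t = r
    · rw [htr, dF_self]
      rw [htr] at hsum hlast
      omega
    · rw [dF_ne lam htr]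
      exact hlast
  · rw [dF_self]
    omega

/-- Chain B (box at row below the strip, merging), direction 1 → big strip. -/
theorem P1B (hcd : canDec lam (t + 1)) (h : RSf k (dF lam (t + 1)) mu.rowLen r t)
    (hB : mu.rowLen t + 1 = lam.rowLen (t + 1)) :
    RSf (k + 1) lam.rowLen mu.rowLen r (t + 1) ∧
      lam.rowLen (t + 1) = mu.rowLen (t + 1) + 1 := by
  obtain ⟨hrt, hlo, hhi, hint, hlast, hsum⟩ := h
  unfold canDec at hcd
  have htw : mu.rowLen (t + 1) = lam.rowLen (t + 1) - 1 := by
    have h1 := hhi (t + 1) (by omega)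
    rw [dF_self] at h1
    exact h1
  refine ⟨⟨by omega, ?_, ?_, ?_, ?_, ?_⟩, by omega⟩
  · intro i hi
    have h1 := hlo i hi
    rw [dF_ne lam (by omega)] at h1
    exact h1
  · intro i hi
    have h1 := hhi i (by omega)
    rw [dF_ne lam (by omega)] at h1
    exact h1
  · intro i hi1 hi2
    by_cases hit : i = t
    · subst hit
      exact hB
    · have h1 := hint i hi1 (by omega)
      rw [dF_ne lam (by omega)] at h1
      exact h1
  · omega
  · have h1 := hsum
    rw [dF_ne lam (by omega)] at h1
    omega

/-- Chain B, direction big strip → 1. -/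
theorem P1B' (h : RSf (k + 1) lam.rowLen mu.rowLen r (t + 1)) (hrT : r ≤ t)
    (htail : lam.rowLen (t + 1) = mu.rowLen (t + 1) + 1) :
    canDec lam (t + 1) ∧ RSf k (dF lam (t + 1)) mu.rowLen r t ∧
      mu.rowLen t + 1 = lam.rowLen (t + 1) := by
  obtain ⟨hrt, hlo, hhi, hint, hlast, hsum⟩ := h
  have hB := hint t (by omega) (by omega)
  have hcd : canDec lam (t + 1) := by
    unfold canDec
    have h1 := hhi (t + 1 + 1) (by omega)
    have h2 := mu.rowLen_anti (t + 1) (t + 1 + 1) (by omega)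
    omega
  refine ⟨hcd, ⟨hrT, ?_, ?_, ?_, ?_, ?_⟩, hB⟩
  · intro i hi
    rw [dF_ne lam (by omega)]
    exact hlo i hi
  · intro i hi
    by_cases hit : i = t + 1
    · subst hit
      rw [dF_self]
      omega
    · rw [dF_ne lam hit]
      exact hhi i (by omega)
  · intro i hi1 hi2
    rw [dF_ne lam (by omega)]
    exact hint i hi1 (by omega)
  · rw [dF_ne lam (by omega)]
    have h1 := lam.rowLen_anti t (t + 1) (by omega)
    omega
  · rw [dF_ne lam (by omega)]
    omega

/-- Chain B' (box at bottom row of strip), direction 2 → big strip. -/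
theorem P2B (hci : canInc mu t) (h : RSf k lam.rowLen (iF mu t) r t) :
    RSf (k + 1) lam.rowLen mu.rowLen r t ∧ mu.rowLen t + 1 < lam.rowLen t := by
  obtain ⟨hrt, hlo, hhi, hint, hlast, hsum⟩ := h
  rw [iF_self] at hlast hsum
  refine ⟨⟨hrt, ?_, ?_, ?_, by omega, by omega⟩, hlast⟩
  · intro i hi
    have h1 := hlo i hi
    rw [iF_ne mu (by omega)] at h1
    exact h1
  · intro i hi
    have h1 := hhi i hi
    rw [iF_ne mu (by omega)] at h1
    exact h1
  · intro i hi1 hi2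
    have h1 := hint i hi1 hi2
    rw [iF_ne mu (by omega)] at h1
    exact h1

/-- Chain B', direction big strip → 2. -/
theorem P2B' (h : RSf (k + 1) lam.rowLen mu.rowLen r t) (hw : mu.rowLen t + 1 < lam.rowLen t) :
    canInc mu t ∧ RSf k lam.rowLen (iF mu t) r t := by
  obtain ⟨hrt, hlo, hhi, hint, hlast, hsum⟩ := h
  have hci : canInc mu t := by
    rcases Nat.eq_zero_or_pos t with rfl | htpos
    · exact Or.inl rfl
    · right
      by_cases hrt1 : r ≤ t - 1
      · have h1 := hint (t - 1) hrt1 (by omega)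
        rw [show t - 1 + 1 = t by omega] at h1
        have := lam.rowLen_anti t t (le_refl t)
        omega
      · have h1 := hlo (t - 1) (by omega)
        have h2 := lam.rowLen_anti (t - 1) t (by omega)
        omega
  refine ⟨hci, hrt, ?_, ?_, ?_, ?_, ?_⟩
  · intro i hi
    rw [iF_ne mu (by omega)]
    exact hlo i hi
  · intro i hi
    rw [iF_ne mu (by omega)]
    exact hhi i hi
  · intro i hi1 hi2
    rw [iF_ne mu (by omega)]
    exact hint i hi1 hi2
  · rw [iF_self]
    exact hw
  · rw [iF_self]
    omega

/-- Chain A' (box just above strip, head width 1), direction 2 → big strip. -/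
theorem P2A (hci : canInc mu a) (h : RSf k lam.rowLen (iF mu a) (a + 1) t)
    (hhd : lam.rowLen a = lam.rowLen (a + 1)) :
    RSf (k + 1) lam.rowLen mu.rowLen a t ∧ mu.rowLen a + 1 = lam.rowLen a := by
  obtain ⟨hrt, hlo, hhi, hint, hlast, hsum⟩ := h
  have hval : mu.rowLen a + 1 = lam.rowLen a := by
    have h1 := hlo a (by omega)
    rw [iF_self] at h1
    omega
  refine ⟨⟨by omega, ?_, ?_, ?_, ?_, ?_⟩, hval⟩
  · intro i hi
    have h1 := hlo i (by omega)
    rw [iF_ne mu (by omega)] at h1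
    exact h1
  · intro i hi
    have h1 := hhi i hi
    rw [iF_ne mu (by omega)] at h1
    exact h1
  · intro i hi1 hi2
    by_cases hia : i = a
    · subst hia
      omega
    · have h1 := hint i (by omega) hi2
      rw [iF_ne mu hia] at h1
      exact h1
  · have h1 := hlast
    rw [iF_ne mu (by omega)] at h1
    exact h1
  · have h1 := hsum
    rw [iF_ne mu (by omega)] at h1
    omega

/-- Chain A', direction big strip → 2. -/
theorem P2A' (h : RSf (k + 1) lam.rowLen mu.rowLen a t) (hhd : lam.rowLen a = lam.rowLen (a + 1))
    (hk : 1 ≤ k) :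
    canInc mu a ∧ RSf k lam.rowLen (iF mu a) (a + 1) t ∧ a + 1 ≤ t ∧
      mu.rowLen a + 1 = lam.rowLen a := by
  obtain ⟨hrt, hlo, hhi, hint, hlast, hsum⟩ := h
  have hat : a < t := by
    rcases Nat.lt_or_ge a t with h' | h'
    · exact h'
    · exfalso
      have hta : t = a := by omega
      subst hta
      have h1 := hhi (t + 1) (by omega)
      have h2 := mu.rowLen_anti t (t + 1) (by omega)
      omega
  have hval : mu.rowLen a + 1 = lam.rowLen a := by
    have h1 := hint a (le_refl a) hat
    omega
  have hci : canInc mu a := by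
    rcases Nat.eq_zero_or_pos a with rfl | hapos
    · exact Or.inl rfl
    · right
      have h1 := hlo (a - 1) (by omega)
      have h2 := lam.rowLen_anti (a - 1) a (by omega)
      omega
  refine ⟨hci, ⟨by omega, ?_, ?_, ?_, ?_, ?_⟩, by omega, hval⟩
  · intro i hi
    by_cases hia : i = a
    · subst hia
      rw [iF_self]
      omega
    · rw [iF_ne mu hia]
      exact hlo i (by omega)
  · intro i hi
    rw [iF_ne mu (by omega)]
    exact hhi i hi
  · intro i hi1 hi2
    rw [iF_ne mu (by omega)]
    exact hint i (by omega) hi2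
  · rw [iF_ne mu (by omega)]
    exact hlast
  · rw [iF_ne mu (by omega)]
    omega

end Partner2
/-! ### Summation helpers -/

theorem sum2_single {f : ℕ → ℕ → ℚ} {N R T : ℕ} (hR : R < N) (hT : T < N)
    (h : ∀ r t, ¬(r = R ∧ t = T) → f r t = 0) :
    (∑ r ∈ range N, ∑ t ∈ range N, f r t) = f R T := by
  rw [Finset.sum_eq_single_of_mem R (Finset.mem_range.2 hR)]
  · exact Finset.sum_eq_single_of_mem T (Finset.mem_range.2 hT)
      (fun t _ ht => h R t (fun hc => ht hc.2))
  · intro r _ hr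
    exact Finset.sum_eq_zero fun t _ => h r t (fun hc => hr hc.1)

theorem sum3_single {f : ℕ → ℕ → ℕ → ℚ} {N A R T : ℕ} (hA : A < N) (hR : R < N) (hT : T < N)
    (h : ∀ a r t, ¬(a = A ∧ r = R ∧ t = T) → f a r t = 0) :
    (∑ a ∈ range N, ∑ r ∈ range N, ∑ t ∈ range N, f a r t) = f A R T := by
  rw [Finset.sum_eq_single_of_mem A (Finset.mem_range.2 hA)]
  · exact sum2_single hR hT (fun r t hc => h A r t (fun hc' => hc ⟨hc'.2.1, hc'.2.2⟩))
  · intro a _ ha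
    exact Finset.sum_eq_zero fun r _ => Finset.sum_eq_zero fun t _ =>
      h a r t (fun hc => ha hc.1)

theorem sum3_zero {f : ℕ → ℕ → ℕ → ℚ} {N : ℕ} (h : ∀ a r t, f a r t = 0) :
    (∑ a ∈ range N, ∑ r ∈ range N, ∑ t ∈ range N, f a r t) = 0 :=
  Finset.sum_eq_zero fun a _ => Finset.sum_eq_zero fun r _ =>
    Finset.sum_eq_zero fun t _ => h a r t

theorem sum_shift {F G : ℕ → ℚ} {N : ℕ} (hN : 1 ≤ N) (h1 : ∀ a, F (a + 1) = G a)
    (h0 : F 0 = 0) (hL : G (N - 1) = 0) :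
    (∑ a ∈ range N, F a) = ∑ a ∈ range N, G a := by
  obtain ⟨M, rfl⟩ : ∃ M, N = M + 1 := ⟨N - 1, by omega⟩
  rw [Finset.sum_range_succ' F, Finset.sum_range_succ G, h0, add_zero]
  have hM : G M = 0 := by simpa using hL
  rw [hM, add_zero]
  exact Finset.sum_congr rfl fun a _ => h1 a

/-! ### The weight functions and their flavor decompositions -/

open scoped Classical

noncomputable def w1 (k : ℕ) (lam mu : YoungDiagram) (a r t : ℕ) : ℚ :=
  if canDec lam a ∧ RSf k (dF lam a) mu.rowLen r t
  then ((lam.rowLen a : ℚ) - 1 - a) * (-1) ^ (t - r) else 0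

noncomputable def w2 (k : ℕ) (lam mu : YoungDiagram) (a r t : ℕ) : ℚ :=
  if canInc mu a ∧ RSf k lam.rowLen (iF mu a) r t
  then ((mu.rowLen a : ℚ) - a) * (-1) ^ (t - r) else 0

noncomputable def w1A (k : ℕ) (lam mu : YoungDiagram) (a r t : ℕ) : ℚ :=
  if (canDec lam a ∧ RSf k (dF lam a) mu.rowLen r t) ∧ a = r
  then ((lam.rowLen a : ℚ) - 1 - a) * (-1) ^ (t - r) else 0

noncomputable def w1B (k : ℕ) (lam mu : YoungDiagram) (a r t : ℕ) : ℚ :=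
  if (canDec lam a ∧ RSf k (dF lam a) mu.rowLen r t) ∧
      (a = t + 1 ∧ mu.rowLen t + 1 = lam.rowLen (t + 1))
  then ((lam.rowLen a : ℚ) - 1 - a) * (-1) ^ (t - r) else 0

noncomputable def w1i (k : ℕ) (lam mu : YoungDiagram) (a r t : ℕ) : ℚ :=
  if (canDec lam a ∧ RSf k (dF lam a) mu.rowLen r t) ∧ (r < a ∧ a ≤ t)
  then ((lam.rowLen a : ℚ) - 1 - a) * (-1) ^ (t - r) else 0

noncomputable def w1o (k : ℕ) (lam mu : YoungDiagram) (a r t : ℕ) : ℚ :=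
  if (canDec lam a ∧ RSf k (dF lam a) mu.rowLen r t) ∧ a ≠ r ∧
      ¬(a = t + 1 ∧ mu.rowLen t + 1 = lam.rowLen (t + 1)) ∧ ¬(r < a ∧ a ≤ t)
  then ((lam.rowLen a : ℚ) - 1 - a) * (-1) ^ (t - r) else 0

noncomputable def w2B (k : ℕ) (lam mu : YoungDiagram) (a r t : ℕ) : ℚ :=
  if (canInc mu a ∧ RSf k lam.rowLen (iF mu a) r t) ∧ a = t
  then ((mu.rowLen a : ℚ) - a) * (-1) ^ (t - r) else 0

noncomputable def w2A (k : ℕ) (lam mu : YoungDiagram) (a r t : ℕ) : ℚ :=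
  if (canInc mu a ∧ RSf k lam.rowLen (iF mu a) r t) ∧
      (a + 1 = r ∧ lam.rowLen a = lam.rowLen (a + 1))
  then ((mu.rowLen a : ℚ) - a) * (-1) ^ (t - r) else 0

noncomputable def w2i (k : ℕ) (lam mu : YoungDiagram) (a r t : ℕ) : ℚ :=
  if (canInc mu a ∧ RSf k lam.rowLen (iF mu a) r t) ∧ (r ≤ a ∧ a < t)
  then ((mu.rowLen a : ℚ) - a) * (-1) ^ (t - r) else 0

noncomputable def w2o (k : ℕ) (lam mu : YoungDiagram) (a r t : ℕ) : ℚ :=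
  if (canInc mu a ∧ RSf k lam.rowLen (iF mu a) r t) ∧ a ≠ t ∧
      ¬(a + 1 = r ∧ lam.rowLen a = lam.rowLen (a + 1)) ∧ ¬(r ≤ a ∧ a < t)
  then ((mu.rowLen a : ℚ) - a) * (-1) ^ (t - r) else 0

theorem w1_split (k : ℕ) (lam mu : YoungDiagram) (a r t : ℕ) :
    w1 k lam mu a r t =
      w1A k lam mu a r t + w1B k lam mu a r t + w1i k lam mu a r t + w1o k lam mu a r t := by
  by_cases hb : canDec lam a ∧ RSf k (dF lam a) mu.rowLen r t
  · have hrt : r ≤ t := hb.2.1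
    have eW : w1 k lam mu a r t = ((lam.rowLen a : ℚ) - 1 - a) * (-1) ^ (t - r) := by
      unfold w1; exact if_pos hb
    by_cases h1 : a = r
    · have eA : w1A k lam mu a r t = ((lam.rowLen a : ℚ) - 1 - a) * (-1) ^ (t - r) := by
        unfold w1A; exact if_pos ⟨hb, h1⟩
      have eB : w1B k lam mu a r t = 0 := by
        unfold w1B; exact if_neg (fun h => by obtain ⟨_, h2, _⟩ := h; omega)
      have ei : w1i k lam mu a r t = 0 := by
        unfold w1i; exact if_neg (fun h => by obtain ⟨_, h2, h3⟩ := h; omega)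
      have eo : w1o k lam mu a r t = 0 := by
        unfold w1o; exact if_neg (fun h => h.2.1 h1)
      rw [eW, eA, eB, ei, eo]; ring
    · by_cases h2 : a = t + 1 ∧ mu.rowLen t + 1 = lam.rowLen (t + 1)
      · have eA : w1A k lam mu a r t = 0 := by
          unfold w1A; exact if_neg (fun h => h1 h.2)
        have eB : w1B k lam mu a r t = ((lam.rowLen a : ℚ) - 1 - a) * (-1) ^ (t - r) := by
          unfold w1B; exact if_pos ⟨hb, h2⟩
        have ei : w1i k lam mu a r t = 0 := by
          unfold w1i; exact if_neg (fun h => by obtain ⟨_, h3, h4⟩ := h; omega)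
        have eo : w1o k lam mu a r t = 0 := by
          unfold w1o; exact if_neg (fun h => h.2.2.1 h2)
        rw [eW, eA, eB, ei, eo]; ring
      · by_cases h3 : r < a ∧ a ≤ t
        · have eA : w1A k lam mu a r t = 0 := by
            unfold w1A; exact if_neg (fun h => h1 h.2)
          have eB : w1B k lam mu a r t = 0 := by
            unfold w1B; exact if_neg (fun h => h2 h.2)
          have ei : w1i k lam mu a r t = ((lam.rowLen a : ℚ) - 1 - a) * (-1) ^ (t - r) := by
            unfold w1i; exact if_pos ⟨hb, h3⟩
          have eo : w1o k lam mu a r t = 0 := by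
            unfold w1o; exact if_neg (fun h => h.2.2.2 h3)
          rw [eW, eA, eB, ei, eo]; ring
        · have eA : w1A k lam mu a r t = 0 := by
            unfold w1A; exact if_neg (fun h => h1 h.2)
          have eB : w1B k lam mu a r t = 0 := by
            unfold w1B; exact if_neg (fun h => h2 h.2)
          have ei : w1i k lam mu a r t = 0 := by
            unfold w1i; exact if_neg (fun h => h3 h.2)
          have eo : w1o k lam mu a r t = ((lam.rowLen a : ℚ) - 1 - a) * (-1) ^ (t - r) := by
            unfold w1o; exact if_pos ⟨hb, h1, h2, h3⟩
          rw [eW, eA, eB, ei, eo]; ring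
  · have eW : w1 k lam mu a r t = 0 := by unfold w1; exact if_neg hb
    have eA : w1A k lam mu a r t = 0 := by unfold w1A; exact if_neg (fun h => hb h.1)
    have eB : w1B k lam mu a r t = 0 := by unfold w1B; exact if_neg (fun h => hb h.1)
    have ei : w1i k lam mu a r t = 0 := by unfold w1i; exact if_neg (fun h => hb h.1)
    have eo : w1o k lam mu a r t = 0 := by unfold w1o; exact if_neg (fun h => hb h.1)
    rw [eW, eA, eB, ei, eo]; ring

theorem w2_split (k : ℕ) (lam mu : YoungDiagram) (a r t : ℕ) :
    w2 k lam mu a r t =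
      w2B k lam mu a r t + w2A k lam mu a r t + w2i k lam mu a r t + w2o k lam mu a r t := by
  by_cases hb : canInc mu a ∧ RSf k lam.rowLen (iF mu a) r t
  · have hrt : r ≤ t := hb.2.1
    have eW : w2 k lam mu a r t = ((mu.rowLen a : ℚ) - a) * (-1) ^ (t - r) := by
      unfold w2; exact if_pos hb
    by_cases h1 : a = t
    · have eB : w2B k lam mu a r t = ((mu.rowLen a : ℚ) - a) * (-1) ^ (t - r) := by
        unfold w2B; exact if_pos ⟨hb, h1⟩
      have eA : w2A k lam mu a r t = 0 := by
        unfold w2A; exact if_neg (fun h => by obtain ⟨_, h2, _⟩ := h; omega)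
      have ei : w2i k lam mu a r t = 0 := by
        unfold w2i; exact if_neg (fun h => by obtain ⟨_, h2, h3⟩ := h; omega)
      have eo : w2o k lam mu a r t = 0 := by
        unfold w2o; exact if_neg (fun h => h.2.1 h1)
      rw [eW, eB, eA, ei, eo]; ring
    · by_cases h2 : a + 1 = r ∧ lam.rowLen a = lam.rowLen (a + 1)
      · have eB : w2B k lam mu a r t = 0 := by
          unfold w2B; exact if_neg (fun h => h1 h.2)
        have eA : w2A k lam mu a r t = ((mu.rowLen a : ℚ) - a) * (-1) ^ (t - r) := by
          unfold w2A; exact if_pos ⟨hb, h2⟩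
        have ei : w2i k lam mu a r t = 0 := by
          unfold w2i; exact if_neg (fun h => by obtain ⟨_, h3, h4⟩ := h; omega)
        have eo : w2o k lam mu a r t = 0 := by
          unfold w2o; exact if_neg (fun h => h.2.2.1 h2)
        rw [eW, eB, eA, ei, eo]; ring
      · by_cases h3 : r ≤ a ∧ a < t
        · have eB : w2B k lam mu a r t = 0 := by
            unfold w2B; exact if_neg (fun h => h1 h.2)
          have eA : w2A k lam mu a r t = 0 := by
            unfold w2A; exact if_neg (fun h => h2 h.2)
          have ei : w2i k lam mu a r t = ((mu.rowLen a : ℚ) - a) * (-1) ^ (t - r) := by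
            unfold w2i; exact if_pos ⟨hb, h3⟩
          have eo : w2o k lam mu a r t = 0 := by
            unfold w2o; exact if_neg (fun h => h.2.2.2 h3)
          rw [eW, eB, eA, ei, eo]; ring
        · have eB : w2B k lam mu a r t = 0 := by
            unfold w2B; exact if_neg (fun h => h1 h.2)
          have eA : w2A k lam mu a r t = 0 := by
            unfold w2A; exact if_neg (fun h => h2 h.2)
          have ei : w2i k lam mu a r t = 0 := by
            unfold w2i; exact if_neg (fun h => h3 h.2)
          have eo : w2o k lam mu a r t = ((mu.rowLen a : ℚ) - a) * (-1) ^ (t - r) := by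
            unfold w2o; exact if_pos ⟨hb, h1, h2, h3⟩
          rw [eW, eB, eA, ei, eo]; ring
  · have eW : w2 k lam mu a r t = 0 := by unfold w2; exact if_neg hb
    have eB : w2B k lam mu a r t = 0 := by unfold w2B; exact if_neg (fun h => hb h.1)
    have eA : w2A k lam mu a r t = 0 := by unfold w2A; exact if_neg (fun h => hb h.1)
    have ei : w2i k lam mu a r t = 0 := by unfold w2i; exact if_neg (fun h => hb h.1)
    have eo : w2o k lam mu a r t = 0 := by unfold w2o; exact if_neg (fun h => hb h.1)
    rw [eW, eB, eA, ei, eo]; ring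
/-! ### The main commutator sum identity -/

theorem main_sum (k N : ℕ) (hk : 1 ≤ k) (lam mu : YoungDiagram)
    (hN : lam.colLen 0 + 2 ≤ N) :
    (∑ a ∈ range N, ∑ r ∈ range N, ∑ t ∈ range N, w1 k lam mu a r t)
      - (∑ a ∈ range N, ∑ r ∈ range N, ∑ t ∈ range N, w2 k lam mu a r t)
    = (k : ℚ) * (∑ r ∈ range N, ∑ t ∈ range N,
        if RSf (k + 1) lam.rowLen mu.rowLen r t then (-1 : ℚ) ^ (t - r) else 0) := by
  classical
  -- split the sums into flavors
  have hs1 : (∑ a ∈ range N, ∑ r ∈ range N, ∑ t ∈ range N, w1 k lam mu a r t)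
      = (∑ a ∈ range N, ∑ r ∈ range N, ∑ t ∈ range N, w1A k lam mu a r t)
      + (∑ a ∈ range N, ∑ r ∈ range N, ∑ t ∈ range N, w1B k lam mu a r t)
      + (∑ a ∈ range N, ∑ r ∈ range N, ∑ t ∈ range N, w1i k lam mu a r t)
      + (∑ a ∈ range N, ∑ r ∈ range N, ∑ t ∈ range N, w1o k lam mu a r t) := by
    rw [← Finset.sum_add_distrib, ← Finset.sum_add_distrib, ← Finset.sum_add_distrib]
    refine Finset.sum_congr rfl fun a _ => ?_
    rw [← Finset.sum_add_distrib, ← Finset.sum_add_distrib, ← Finset.sum_add_distrib]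
    refine Finset.sum_congr rfl fun r _ => ?_
    rw [← Finset.sum_add_distrib, ← Finset.sum_add_distrib, ← Finset.sum_add_distrib]
    exact Finset.sum_congr rfl fun t _ => w1_split k lam mu a r t
  have hs2 : (∑ a ∈ range N, ∑ r ∈ range N, ∑ t ∈ range N, w2 k lam mu a r t)
      = (∑ a ∈ range N, ∑ r ∈ range N, ∑ t ∈ range N, w2B k lam mu a r t)
      + (∑ a ∈ range N, ∑ r ∈ range N, ∑ t ∈ range N, w2A k lam mu a r t)
      + (∑ a ∈ range N, ∑ r ∈ range N, ∑ t ∈ range N, w2i k lam mu a r t)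
      + (∑ a ∈ range N, ∑ r ∈ range N, ∑ t ∈ range N, w2o k lam mu a r t) := by
    rw [← Finset.sum_add_distrib, ← Finset.sum_add_distrib, ← Finset.sum_add_distrib]
    refine Finset.sum_congr rfl fun a _ => ?_
    rw [← Finset.sum_add_distrib, ← Finset.sum_add_distrib, ← Finset.sum_add_distrib]
    refine Finset.sum_congr rfl fun r _ => ?_
    rw [← Finset.sum_add_distrib, ← Finset.sum_add_distrib, ← Finset.sum_add_distrib]
    exact Finset.sum_congr rfl fun t _ => w2_split k lam mu a r t
  -- in-flavor sums agree (after an index shift)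
  have hInEq : ∀ a r t, w1i k lam mu (a + 1) r t = w2i k lam mu a r t := by
    intro a r t
    unfold w1i w2i
    by_cases h : (canInc mu a ∧ RSf k lam.rowLen (iF mu a) r t) ∧ (r ≤ a ∧ a < t)
    · obtain ⟨⟨hci, hrs⟩, hin⟩ := h
      obtain ⟨hcd, hrs', hval⟩ := P2in hci hrs hin
      rw [if_pos ⟨⟨hcd, hrs'⟩, by omega⟩, if_pos ⟨⟨hci, hrs⟩, hin⟩]
      rw [hval]
      push_cast
      ring
    · rw [if_neg h, if_neg]
      rintro ⟨⟨hcd, hrs⟩, hin⟩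
      obtain ⟨hci, hrs', hval⟩ := P1in hcd hrs (by omega)
      exact h ⟨⟨hci, hrs'⟩, by omega⟩
  have hIn : (∑ a ∈ range N, ∑ r ∈ range N, ∑ t ∈ range N, w1i k lam mu a r t)
      = ∑ a ∈ range N, ∑ r ∈ range N, ∑ t ∈ range N, w2i k lam mu a r t := by
    refine sum_shift (by omega) (fun a => ?_) ?_ ?_
    · exact Finset.sum_congr rfl fun r _ => Finset.sum_congr rfl fun t _ => hInEq a r t
    · refine Finset.sum_eq_zero fun r _ => Finset.sum_eq_zero fun t _ => ?_
      unfold w1i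
      exact if_neg (fun h => by omega)
    · refine Finset.sum_eq_zero fun r _ => Finset.sum_eq_zero fun t ht => ?_
      rw [Finset.mem_range] at ht
      unfold w2i
      exact if_neg (fun h => by omega)
  -- out-flavor sums agree pointwise
  have hOutEq : ∀ a r t, w1o k lam mu a r t = w2o k lam mu a r t := by
    intro a r t
    unfold w1o w2o
    by_cases h : (canDec lam a ∧ RSf k (dF lam a) mu.rowLen r t) ∧ a ≠ r ∧
        ¬(a = t + 1 ∧ mu.rowLen t + 1 = lam.rowLen (t + 1)) ∧ ¬(r < a ∧ a ≤ t)
    · obtain ⟨⟨hcd, hrs⟩, hne, hnB, hni⟩ := h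
      have hrt : r ≤ t := hrs.1
      have hout : ¬(r ≤ a ∧ a ≤ t) := by omega
      obtain ⟨hci, hrs', hval⟩ := P1out hcd hrs hout hnB
      have hcd' : lam.rowLen (a + 1) < lam.rowLen a := hcd
      rw [if_pos ⟨⟨hcd, hrs⟩, hne, hnB, hni⟩,
        if_pos ⟨⟨hci, hrs'⟩, by omega, by rintro ⟨_, he⟩; omega, by omega⟩]
      rw [← hval]
      push_cast
      ring
    · rw [if_neg h, if_neg]
      rintro ⟨⟨hci, hrs⟩, hne, hnA, hni⟩
      have hrt : r ≤ t := hrs.1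
      have hout : ¬(r ≤ a ∧ a ≤ t) := by omega
      obtain ⟨hcd, hrs', hnB, hval⟩ := P2out hci hrs hout hnA
      exact h ⟨⟨hcd, hrs'⟩, by omega, hnB, by omega⟩
  by_cases hex : ∃ p : ℕ × ℕ, RSf (k + 1) lam.rowLen mu.rowLen p.1 p.2
  · obtain ⟨⟨R, T⟩, hRT0⟩ := hex
    have hRT : RSf (k + 1) lam.rowLen mu.rowLen R T := hRT0
    clear hRT0
    have hanti := rowLen_anti' lam
    have huniq : ∀ r t, RSf (k + 1) lam.rowLen mu.rowLen r t → r = R ∧ t = T := by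
      intro r t h
      have := RSf_unique hanti h hRT
      omega
    have hRle : R ≤ T := hRT.1
    have hTb : T < lam.colLen 0 :=
      lt_colLen_of_rowLen_pos lam (by have := hRT.2.2.2.2.1; omega)
    have hTN : T < N := by omega
    have hRN : R < N := by omega
    -- RHS inner sum
    have hRHS : (∑ r ∈ range N, ∑ t ∈ range N,
        if RSf (k + 1) lam.rowLen mu.rowLen r t then (-1 : ℚ) ^ (t - r) else 0)
        = (-1 : ℚ) ^ (T - R) := by
      rw [sum2_single hRN hTN (fun r t hc => by
        rw [if_neg]
        intro h
        exact hc ⟨(huniq r t h).1, (huniq r t h).2⟩)]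
      exact if_pos hRT
    -- head sums
    have hA : (∑ a ∈ range N, ∑ r ∈ range N, ∑ t ∈ range N, w1A k lam mu a r t)
        = if lam.rowLen (R + 1) < lam.rowLen R
          then ((lam.rowLen R : ℚ) - 1 - R) * (-1) ^ (T - R) else 0 := by
      by_cases hh : lam.rowLen (R + 1) < lam.rowLen R
      · rw [if_pos hh]
        rw [sum3_single hRN hRN hTN (f := fun a r t => w1A k lam mu a r t) (fun a r t hc => by
          show w1A k lam mu a r t = 0
          unfold w1A
          rw [if_neg]
          rintro ⟨⟨hcd, hrs⟩, rfl⟩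
          have := huniq a t (P1A hcd hrs)
          exact hc ⟨by omega, by omega, by omega⟩)]
        show w1A k lam mu R R T = _
        unfold w1A
        rw [if_pos ⟨⟨hh, (P1A' hRT hh hk).2⟩, rfl⟩]
      · rw [if_neg hh]
        refine sum3_zero fun a r t => ?_
        unfold w1A
        rw [if_neg]
        rintro ⟨⟨hcd, hrs⟩, rfl⟩
        have h2 := huniq a t (P1A hcd hrs)
        have : a = R := by omega
        subst this
        exact hh hcd
    have h2A : (∑ a ∈ range N, ∑ r ∈ range N, ∑ t ∈ range N, w2A k lam mu a r t)
        = if lam.rowLen R = lam.rowLen (R + 1)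
          then ((mu.rowLen R : ℚ) - R) * (-1) ^ (T - (R + 1)) else 0 := by
      by_cases hh : lam.rowLen R = lam.rowLen (R + 1)
      · rw [if_pos hh]
        obtain ⟨hci, hrs, hR1T, hval⟩ := P2A' hRT hh hk
        rw [sum3_single hRN (show R + 1 < N by omega) hTN
          (f := fun a r t => w2A k lam mu a r t) (fun a r t hc => by
          show w2A k lam mu a r t = 0
          unfold w2A
          rw [if_neg]
          rintro ⟨⟨hci', hrs'⟩, har, hhd⟩
          rw [← har] at hrs'
          have := huniq a t (P2A hci' hrs' hhd).1
          exact hc ⟨by omega, by omega, by omega⟩)]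
        show w2A k lam mu R (R + 1) T = _
        unfold w2A
        rw [if_pos ⟨⟨hci, hrs⟩, rfl, hh⟩]
      · rw [if_neg hh]
        refine sum3_zero fun a r t => ?_
        unfold w2A
        rw [if_neg]
        rintro ⟨⟨hci', hrs'⟩, har, hhd⟩
        rw [← har] at hrs'
        have h2 := huniq a t (P2A hci' hrs' hhd).1
        have : a = R := by omega
        subst this
        exact hh hhd
    -- tail sums
    have hB : (∑ a ∈ range N, ∑ r ∈ range N, ∑ t ∈ range N, w1B k lam mu a r t)
        = if R < T ∧ lam.rowLen T = mu.rowLen T + 1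
          then ((lam.rowLen T : ℚ) - 1 - T) * (-1) ^ (T - 1 - R) else 0 := by
      by_cases hc : R < T ∧ lam.rowLen T = mu.rowLen T + 1
      · rw [if_pos hc]
        obtain ⟨T', rfl⟩ : ∃ T', T = T' + 1 := ⟨T - 1, by omega⟩
        obtain ⟨hcd, hrs, hval⟩ := P1B' hRT (by omega) (by omega)
        rw [sum3_single hTN hRN (show T' < N by omega)
          (f := fun a r t => w1B k lam mu a r t) (fun a r t hcc => by
          show w1B k lam mu a r t = 0
          unfold w1B
          rw [if_neg]
          rintro ⟨⟨hcd', hrs'⟩, haB, hmuB⟩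
          rw [haB] at hcd' hrs'
          have := huniq r (t + 1) (P1B hcd' hrs' hmuB).1
          exact hcc ⟨by omega, by omega, by omega⟩)]
        show w1B k lam mu (T' + 1) R T' = _
        unfold w1B
        rw [if_pos ⟨⟨hcd, hrs⟩, rfl, hval⟩]
        norm_num
      · rw [if_neg hc]
        refine sum3_zero fun a r t => ?_
        unfold w1B
        rw [if_neg]
        rintro ⟨⟨hcd', hrs'⟩, haB, hmuB⟩
        rw [haB] at hcd' hrs'
        obtain ⟨hbig, htw⟩ := P1B hcd' hrs' hmuB
        have h2 := huniq r (t + 1) hbig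
        have hrs1 : r ≤ t := hrs'.1
        exact hc ⟨by omega, by rw [← h2.2]; omega⟩
    have h2B : (∑ a ∈ range N, ∑ r ∈ range N, ∑ t ∈ range N, w2B k lam mu a r t)
        = if mu.rowLen T + 1 < lam.rowLen T
          then ((mu.rowLen T : ℚ) - T) * (-1) ^ (T - R) else 0 := by
      by_cases hw : mu.rowLen T + 1 < lam.rowLen T
      · rw [if_pos hw]
        obtain ⟨hci, hrs⟩ := P2B' hRT hw
        rw [sum3_single hTN hRN hTN (f := fun a r t => w2B k lam mu a r t)
          (fun a r t hc => by
          show w2B k lam mu a r t = 0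
          unfold w2B
          rw [if_neg]
          rintro ⟨⟨hci', hrs'⟩, rfl⟩
          have := huniq r a (P2B hci' hrs').1
          exact hc ⟨by omega, by omega, by omega⟩)]
        show w2B k lam mu T R T = _
        unfold w2B
        rw [if_pos ⟨⟨hci, hrs⟩, rfl⟩]
      · rw [if_neg hw]
        refine sum3_zero fun a r t => ?_
        unfold w2B
        rw [if_neg]
        rintro ⟨⟨hci', hrs'⟩, rfl⟩
        obtain ⟨hbig, hwid⟩ := P2B hci' hrs'
        have h2 := huniq r a hbig
        rw [h2.2] at hwid
        exact hw hwid
    -- put everything together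
    have hOut : (∑ a ∈ range N, ∑ r ∈ range N, ∑ t ∈ range N, w1o k lam mu a r t)
        = ∑ a ∈ range N, ∑ r ∈ range N, ∑ t ∈ range N, w2o k lam mu a r t :=
      Finset.sum_congr rfl fun a _ => Finset.sum_congr rfl fun r _ =>
        Finset.sum_congr rfl fun t _ => hOutEq a r t
    have hsum := hRT.2.2.2.2.2
    have hlast := hRT.2.2.2.2.1
    have hanti1 := lam.rowLen_anti R (R + 1) (by omega)
    have hcast : ((lam.rowLen R : ℚ) - 1 - R) - ((mu.rowLen T : ℚ) - T) = (k : ℚ) := by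
      have h3 := congrArg (fun n : ℕ => (n : ℚ)) hsum
      push_cast [Nat.cast_sub hRle] at h3
      linarith
    have hpow : ∀ m : ℕ, R < m → ((-1 : ℚ)) ^ (m - 1 - R) = -(-1 : ℚ) ^ (m - R) := by
      intro m hm
      have he : m - R = (m - 1 - R) + 1 := by omega
      rw [he, pow_succ]
      ring
    have hHead : (if lam.rowLen (R + 1) < lam.rowLen R
          then ((lam.rowLen R : ℚ) - 1 - R) * (-1) ^ (T - R) else 0)
        - (if lam.rowLen R = lam.rowLen (R + 1)
          then ((mu.rowLen R : ℚ) - R) * (-1) ^ (T - (R + 1)) else 0)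
        = ((lam.rowLen R : ℚ) - 1 - R) * (-1) ^ (T - R) := by
      by_cases hh : lam.rowLen (R + 1) < lam.rowLen R
      · have hne : ¬(lam.rowLen R = lam.rowLen (R + 1)) := by omega
        rw [if_pos hh, if_neg hne, sub_zero]
      · have hhe : lam.rowLen R = lam.rowLen (R + 1) := by omega
        rw [if_neg hh, if_pos hhe, zero_sub]
        obtain ⟨hci, hrs, hR1T, hval⟩ := P2A' hRT hhe hk
        have hμ : (mu.rowLen R : ℚ) = (lam.rowLen R : ℚ) - 1 := by
          have h3 := congrArg (fun n : ℕ => (n : ℚ)) hval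
          push_cast at h3
          linarith
        have hexp : T - (R + 1) = T - 1 - R := by omega
        rw [hexp, hpow T (by omega), hμ]
        ring
    have hTail : (if R < T ∧ lam.rowLen T = mu.rowLen T + 1
          then ((lam.rowLen T : ℚ) - 1 - T) * (-1) ^ (T - 1 - R) else 0)
        - (if mu.rowLen T + 1 < lam.rowLen T
          then ((mu.rowLen T : ℚ) - T) * (-1) ^ (T - R) else 0)
        = -(((mu.rowLen T : ℚ) - T) * (-1) ^ (T - R)) := by
      by_cases hw : mu.rowLen T + 1 < lam.rowLen T
      · have hne : ¬(R < T ∧ lam.rowLen T = mu.rowLen T + 1) := by omega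
        rw [if_neg hne, if_pos hw, zero_sub]
      · have hwe : lam.rowLen T = mu.rowLen T + 1 := by omega
        have hRT' : R < T := by
          by_contra hcon
          have hRTeq : R = T := by omega
          rw [hRTeq] at hsum
          omega
        rw [if_pos ⟨hRT', hwe⟩, if_neg hw, sub_zero, hwe, hpow T hRT']
        push_cast
        ring
    rw [hs1, hs2, hIn, hOut, hA, h2A, hB, h2B, hRHS]
    linear_combination hHead + hTail + ((-1 : ℚ)) ^ (T - R) * hcast
  · -- no big strip: everything cancels
    push_neg at hex
    have hA0 : (∑ a ∈ range N, ∑ r ∈ range N, ∑ t ∈ range N, w1A k lam mu a r t) = 0 := by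
      refine sum3_zero fun a r t => ?_
      unfold w1A
      rw [if_neg]
      rintro ⟨⟨hcd, hrs⟩, rfl⟩
      exact absurd (P1A hcd hrs) (by simpa using hex (a, t))
    have hB0 : (∑ a ∈ range N, ∑ r ∈ range N, ∑ t ∈ range N, w1B k lam mu a r t) = 0 := by
      refine sum3_zero fun a r t => ?_
      unfold w1B
      rw [if_neg]
      rintro ⟨⟨hcd, hrs⟩, haB, hmuB⟩
      rw [haB] at hcd hrs
      exact absurd (P1B hcd hrs hmuB).1 (by simpa using hex (r, t + 1))
    have h2A0 : (∑ a ∈ range N, ∑ r ∈ range N, ∑ t ∈ range N, w2A k lam mu a r t) = 0 := by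
      refine sum3_zero fun a r t => ?_
      unfold w2A
      rw [if_neg]
      rintro ⟨⟨hci, hrs⟩, har, hhd⟩
      rw [← har] at hrs
      exact absurd (P2A hci hrs hhd).1 (by simpa using hex (a, t))
    have h2B0 : (∑ a ∈ range N, ∑ r ∈ range N, ∑ t ∈ range N, w2B k lam mu a r t) = 0 := by
      refine sum3_zero fun a r t => ?_
      unfold w2B
      rw [if_neg]
      rintro ⟨⟨hci, hrs⟩, rfl⟩
      exact absurd (P2B hci hrs).1 (by simpa using hex (r, a))
    have hRHS0 : (∑ r ∈ range N, ∑ t ∈ range N,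
        if RSf (k + 1) lam.rowLen mu.rowLen r t then (-1 : ℚ) ^ (t - r) else 0) = 0 := by
      refine Finset.sum_eq_zero fun r _ => Finset.sum_eq_zero fun t _ => ?_
      rw [if_neg (by simpa using hex (r, t))]
    have hOut : (∑ a ∈ range N, ∑ r ∈ range N, ∑ t ∈ range N, w1o k lam mu a r t)
        = ∑ a ∈ range N, ∑ r ∈ range N, ∑ t ∈ range N, w2o k lam mu a r t :=
      Finset.sum_congr rfl fun a _ => Finset.sum_congr rfl fun r _ =>
        Finset.sum_congr rfl fun t _ => hOutEq a r t
    rw [hs1, hs2, hIn, hOut, hA0, hB0, h2A0, h2B0, hRHS0]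
    ring
/-! ### The border-strip entry function -/

noncomputable def bsEnt (m : ℕ) (lam mu : YoungDiagram) : ℚ :=
  if mu.cells ⊆ lam.cells ∧ lam.cells.card = mu.cells.card + m ∧
      IsBorderStrip (lam.cells \ mu.cells)
  then (-1 : ℚ) ^ (stripHt (lam.cells \ mu.cells) - 1) else 0

theorem RS_def (m : ℕ) (lam mu : YoungDiagram) (r t : ℕ) :
    RS m lam mu r t = RSf m lam.rowLen mu.rowLen r t := rfl

theorem bsEnt_eq (m : ℕ) (lam mu : YoungDiagram) {N : ℕ} (hN : lam.colLen 0 < N) :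
    bsEnt m lam mu = ∑ r ∈ range N, ∑ t ∈ range N,
      if RS m lam mu r t then (-1 : ℚ) ^ (t - r) else 0 := by
  by_cases hex : ∃ p : ℕ × ℕ, RS m lam mu p.1 p.2
  · obtain ⟨⟨r, t⟩, hrt0⟩ := hex
    have hrt : RS m lam mu r t := hrt0
    clear hrt0
    obtain ⟨hsub, hcard, hbs, hht⟩ := hrt.char
    have htb : t < N := by have := hrt.t_lt_colLen; omega
    have hrb : r < N := by have := hrt.1; omega
    rw [sum2_single hrb htb (fun r' t' hc => by
      rw [if_neg]
      intro h
      have := RSf_unique (rowLen_anti' lam) h hrt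
      exact hc ⟨by omega, by omega⟩)]
    rw [if_pos hrt]
    unfold bsEnt
    rw [if_pos ⟨hsub, hcard, hbs⟩, hht]
    congr 1
  · have h0 : ¬(mu.cells ⊆ lam.cells ∧ lam.cells.card = mu.cells.card + m ∧
        IsBorderStrip (lam.cells \ mu.cells)) := by
      rintro ⟨h1, h2, h3⟩
      obtain ⟨r, t, h⟩ := RS.of_borderStrip h1 h2 h3
      exact hex ⟨(r, t), h⟩
    unfold bsEnt
    rw [if_neg h0]
    exact (Finset.sum_eq_zero fun r _ => Finset.sum_eq_zero fun t _ =>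
      if_neg (fun h => hex ⟨(r, t), h⟩)).symm

theorem covers_RS {lam mu : YoungDiagram} {a : ℕ} (ha : mu.rowLen a + 1 = lam.rowLen a)
    (hall : ∀ i, i ≠ a → mu.rowLen i = lam.rowLen i) : RS 1 lam mu a a :=
  ⟨le_refl a, fun i hi => hall i (by omega), fun i hi => hall i (by omega),
    fun i h1 h2 => by omega, by omega, by omega⟩

theorem RS_one {lam mu : YoungDiagram} {r t : ℕ} (h : RS 1 lam mu r t) : Covers mu lam := by
  obtain ⟨hrt, hlo, hhi, hint, hlast, hsum⟩ := h
  have h1 := lam.rowLen_anti r t hrt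
  have hteq : r = t := by omega
  subst hteq
  rw [covers_iff]
  exact ⟨r, by omega, fun i hi => by
    rcases Nat.lt_or_ge i r with h' | h'
    · exact hlo i h'
    · exact hhi i (by omega)⟩

theorem bsEnt_one (lam mu : YoungDiagram) :
    bsEnt 1 lam mu = if Covers mu lam then 1 else 0 := by
  by_cases hc : Covers mu lam
  · obtain ⟨a, ha, hall⟩ := covers_iff.1 hc
    have hrs := covers_RS ha hall
    obtain ⟨hsub, hcard, hbs, hht⟩ := hrs.char
    unfold bsEnt
    rw [if_pos ⟨hsub, hcard, hbs⟩, hht, if_pos hc]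
    norm_num
  · unfold bsEnt
    rw [if_neg, if_neg hc]
    rintro ⟨h1, h2, h3⟩
    obtain ⟨r, t, h⟩ := RS.of_borderStrip h1 h2 h3
    exact hc (RS_one h)

/-! ### colLen monotonicity and content values -/

theorem colLen_mono {nu lam : YoungDiagram} (h : ∀ i, nu.rowLen i ≤ lam.rowLen i) :
    nu.colLen 0 ≤ lam.colLen 0 := by
  by_contra hc
  push_neg at hc
  have h1 := rowLen_zero_of_colLen_le lam (le_refl (lam.colLen 0))
  have h2 : 0 < nu.rowLen (lam.colLen 0) := by
    have := lt_colLen_of_rowLen_pos nu (i := lam.colLen 0)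
    by_contra hz
    push_neg at hz
    have h3 : nu.rowLen (lam.colLen 0) = 0 := by omega
    have h4 : ∀ i, lam.colLen 0 ≤ i → nu.rowLen i = 0 := by
      intro i hi
      have := nu.rowLen_anti (lam.colLen 0) i hi
      omega
    -- so nu.colLen 0 ≤ lam.colLen 0
    have := rowLen_zero_of_colLen_le nu (le_refl (nu.colLen 0))
    have h5 : (nu.colLen 0 - 1, 0) ∈ nu := by
      rw [YoungDiagram.mem_iff_lt_colLen]
      omega
    rw [YoungDiagram.mem_iff_lt_rowLen] at h5
    have := h4 (nu.colLen 0 - 1) (by omega)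
    omega
  have := h (lam.colLen 0)
  omega

theorem remContent_decYD {lam : YoungDiagram} {a : ℕ} (h : canDec lam a) :
    remContent (decYD lam a) lam = (lam.rowLen a : ℤ) - 1 - a := by
  have hcd : lam.rowLen (a + 1) < lam.rowLen a := h
  rw [remContent_of_covers (mu := decYD lam a) (lam := lam) (a := a)
    (by rw [rowLen_decYD_of_canDec h a, if_pos rfl]; omega)
    (fun i hi => by rw [rowLen_decYD_of_canDec h i, if_neg hi])]
  rw [rowLen_decYD_of_canDec h a, if_pos rfl]
  have : (1 : ℕ) ≤ lam.rowLen a := by omega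
  push_cast [this]
  ring

theorem remContent_incYD {mu : YoungDiagram} {a : ℕ} (h : canInc mu a) :
    remContent mu (incYD mu a) = (mu.rowLen a : ℤ) - a := by
  rw [remContent_of_covers (mu := mu) (lam := incYD mu a) (a := a)
    (by rw [rowLen_incYD_of_canInc h a, if_pos rfl])
    (fun i hi => by rw [rowLen_incYD_of_canInc h i, if_neg hi])]

theorem decYD_inj {lam : YoungDiagram} {x y : ℕ} (hx : canDec lam x) (hy : canDec lam y)
    (h : decYD lam x = decYD lam y) : x = y := by
  by_contra hne
  have h1 := congrArg (fun d : YoungDiagram => d.rowLen x) h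
  rw [rowLen_decYD_of_canDec hx x, if_pos rfl, rowLen_decYD_of_canDec hy x, if_neg hne] at h1
  have : lam.rowLen (x + 1) < lam.rowLen x := hx
  omega

theorem incYD_inj {mu : YoungDiagram} {x y : ℕ} (hx : canInc mu x) (hy : canInc mu y)
    (h : incYD mu x = incYD mu y) : x = y := by
  by_contra hne
  have h1 := congrArg (fun d : YoungDiagram => d.rowLen x) h
  rw [rowLen_incYD_of_canInc hx x, if_pos rfl, rowLen_incYD_of_canInc hy x, if_neg hne] at h1
  omega
end DMN

open Finset in
open scoped Classical in
/-- **Dual Murnaghan–Nakayama rule.** For `k ≥ 1`, the bosonic operator `ρ⁽ᵏ⁾` acts on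
Schur functions by removing border strips of `k` boxes with sign `(-1)^{ht - 1}`. -/
theorem dual_murnaghan_nakayama
    {L : Type*} [CommRing L] [Algebra ℚ L]
    (s : Module.Basis YoungDiagram ℚ L)
    (hone : s (⊥ : YoungDiagram) = 1)
    (hPieri : ∀ (k : ℕ) (lam mu : YoungDiagram),
      s.repr (s (rowYD k) * s lam) mu =
        if mu.cells.card = lam.cells.card + k ∧ IsHStrip lam mu then 1 else 0)
    (xi : Module.End ℚ L)
    (hxi : ∀ lam mu : YoungDiagram,
      s.repr (xi (s lam)) mu = if Covers mu lam then 1 else 0)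
    (nabla : Module.End ℚ L)
    (hnabla : ∀ lam mu : YoungDiagram,
      s.repr (nabla (s lam)) mu =
        if Covers mu lam then (remContent mu lam : ℚ) else 0)
    : ∀ k : ℕ, 1 ≤ k → ∀ lam mu : YoungDiagram,
      s.repr (rhoOp xi nabla (k - 1) (s lam)) mu =
        if mu.cells ⊆ lam.cells ∧ lam.cells.card = mu.cells.card + k ∧
            IsBorderStrip (lam.cells \ mu.cells)
        then (-1 : ℚ) ^ (stripHt (lam.cells \ mu.cells) - 1) else 0 := by
  classical
  have comp : ∀ (T U : Module.End ℚ L) (lam mu : YoungDiagram),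
      s.repr ((T * U) (s lam)) mu =
        (s.repr (U (s lam))).sum (fun ν c => c * (s.repr (T (s ν)) mu)) := by
    intro T U lam mu
    rw [Module.End.mul_apply]
    conv_lhs => rw [← Module.Basis.linearCombination_repr s (U (s lam))]
    rw [Finsupp.linearCombination_apply, map_finsuppSum, map_finsuppSum, Finsupp.sum_apply]
    refine Finsupp.sum_congr fun ν _ => ?_
    rw [map_smul, map_smul, Finsupp.smul_apply, smul_eq_mul]
  have key : ∀ n : ℕ, ∀ lam mu : YoungDiagram,
      s.repr (rhoOp xi nabla n (s lam)) mu = DMN.bsEnt (n + 1) lam mu := by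
    intro n
    induction n with
    | zero =>
      intro lam mu
      show s.repr (xi (s lam)) mu = _
      rw [hxi, DMN.bsEnt_one]
    | succ n ih =>
      intro lam mu
      set N := lam.colLen 0 + 2 with hNdef
      have hNb : lam.colLen 0 < N := by omega
      have e1 : rhoOp xi nabla (n + 1)
          = ((n : ℚ) + 1)⁻¹ • (rhoOp xi nabla n * nabla - nabla * rhoOp xi nabla n) := rfl
      rw [e1, LinearMap.smul_apply, map_smul, Finsupp.smul_apply, smul_eq_mul,
        LinearMap.sub_apply, map_sub, Finsupp.sub_apply]
      -- Term 1
      have hT1 : s.repr ((rhoOp xi nabla n * nabla) (s lam)) mu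
          = ∑ a ∈ range N, ∑ r ∈ range N, ∑ t ∈ range N, DMN.w1 (n + 1) lam mu a r t := by
        rw [comp]
        have hsub : (s.repr (nabla (s lam))).support ⊆
            ((range N).filter (fun a => DMN.canDec lam a)).image (fun a => DMN.decYD lam a) := by
          intro ν hν
          have hne : s.repr (nabla (s lam)) ν ≠ 0 := Finsupp.mem_support_iff.1 hν
          rw [hnabla] at hne
          have hcov : Covers ν lam := by
            by_contra hc
            rw [if_neg hc] at hne
            exact hne rfl
          obtain ⟨a, ha, hall⟩ := DMN.covers_iff.1 hcov
          have hcd : DMN.canDec lam a := by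
            show lam.rowLen (a + 1) < lam.rowLen a
            have h1 := hall (a + 1) (by omega)
            have h2 := ν.rowLen_anti a (a + 1) (by omega)
            omega
          have haN : a < N := by
            have := DMN.lt_colLen_of_rowLen_pos lam (i := a) (by omega)
            omega
          refine Finset.mem_image.2 ⟨a, Finset.mem_filter.2 ⟨Finset.mem_range.2 haN, hcd⟩, ?_⟩
          refine DMN.ydext fun i => ?_
          rw [DMN.rowLen_decYD_of_canDec hcd i]
          by_cases hia : i = a
          · rw [if_pos hia, hia]
            omega
          · rw [if_neg hia, hall i hia]
        rw [Finsupp.sum_of_support_subset _ hsub _ (fun i _ => by rw [zero_mul])]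
        rw [Finset.sum_image (fun x hx y hy h =>
          DMN.decYD_inj (Finset.mem_filter.1 hx).2 (Finset.mem_filter.1 hy).2 h)]
        rw [Finset.sum_filter]
        refine Finset.sum_congr rfl fun a _ => ?_
        by_cases hcd : DMN.canDec lam a
        · rw [if_pos hcd]
          rw [hnabla, if_pos (DMN.covers_decYD hcd), DMN.remContent_decYD hcd, ih]
          have hcolb : (DMN.decYD lam a).colLen 0 < N := by
            have hmono : ∀ i, (DMN.decYD lam a).rowLen i ≤ lam.rowLen i := by
              intro i
              rw [DMN.rowLen_decYD_of_canDec hcd i]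
              split_ifs with h
              · rw [h]; omega
              · exact le_refl _
            have := DMN.colLen_mono hmono
            omega
          rw [DMN.bsEnt_eq (n + 1) (DMN.decYD lam a) mu hcolb]
          rw [Finset.mul_sum]
          refine Finset.sum_congr rfl fun r _ => ?_
          rw [Finset.mul_sum]
          refine Finset.sum_congr rfl fun t _ => ?_
          by_cases hrs : DMN.RS (n + 1) (DMN.decYD lam a) mu r t
          · rw [if_pos hrs]
            unfold DMN.w1
            rw [if_pos ⟨hcd, (DMN.RS_dec_iff hcd).1 hrs⟩]
            have h1 : (1 : ℕ) ≤ lam.rowLen a := by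
              have : lam.rowLen (a + 1) < lam.rowLen a := hcd
              omega
            push_cast
            ring
          · rw [if_neg hrs]
            unfold DMN.w1
            rw [if_neg (fun h => hrs ((DMN.RS_dec_iff hcd).2 h.2))]
            rw [mul_zero]
        · rw [if_neg hcd]
          refine (Finset.sum_eq_zero fun r _ => Finset.sum_eq_zero fun t _ => ?_).symm
          unfold DMN.w1
          exact if_neg (fun h => hcd h.1)
      -- Term 2
      have hT2 : s.repr ((nabla * rhoOp xi nabla n) (s lam)) mu
          = ∑ a ∈ range N, ∑ r ∈ range N, ∑ t ∈ range N, DMN.w2 (n + 1) lam mu a r t := by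
        rw [comp]
        have hstep : (s.repr (rhoOp xi nabla n (s lam))).sum
            (fun ν c => c * (s.repr (nabla (s ν)) mu))
            = ∑ ν ∈ (s.repr (rhoOp xi nabla n (s lam))).support,
                (s.repr (rhoOp xi nabla n (s lam))) ν * (s.repr (nabla (s ν)) mu) := rfl
        rw [hstep]
        set l := s.repr (rhoOp xi nabla n (s lam)) with hl
        have hfil : (∑ ν ∈ l.support, l ν * (s.repr (nabla (s ν)) mu))
            = ∑ ν ∈ l.support.filter (fun ν => Covers mu ν),
                l ν * (s.repr (nabla (s ν)) mu) := by
          refine (Finset.sum_filter_of_ne fun ν _ hne => ?_).symm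
          by_contra hc
          rw [hnabla, if_neg hc, mul_zero] at hne
          exact hne rfl
        rw [hfil]
        have hsub2 : l.support.filter (fun ν => Covers mu ν) ⊆
            ((range N).filter (fun a => DMN.canInc mu a)).image (fun a => DMN.incYD mu a) := by
          intro ν hν
          obtain ⟨hν1, hcov⟩ := Finset.mem_filter.1 hν
          have hne : l ν ≠ 0 := Finsupp.mem_support_iff.1 hν1
          rw [hl, ih] at hne
          have hsubnl : ∀ i, ν.rowLen i ≤ lam.rowLen i := by
            have : ν.cells ⊆ lam.cells := by
              by_contra hc
              apply hne
              unfold DMN.bsEnt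
              rw [if_neg (fun h => hc h.1)]
            exact DMN.subset_iff_rowLen.1 this
          obtain ⟨a, ha, hall⟩ := DMN.covers_iff.1 hcov
          have hci : DMN.canInc mu a := by
            rcases Nat.eq_zero_or_pos a with rfl | hpos
            · exact Or.inl rfl
            · right
              have h1 := hall (a - 1) (by omega)
              have h2 := ν.rowLen_anti (a - 1) a (by omega)
              omega
          have haN : a < N := by
            have h1 := hsubnl a
            have := DMN.lt_colLen_of_rowLen_pos lam (i := a) (by omega)
            omega
          refine Finset.mem_image.2 ⟨a, Finset.mem_filter.2 ⟨Finset.mem_range.2 haN, hci⟩, ?_⟩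
          refine DMN.ydext fun i => ?_
          rw [DMN.rowLen_incYD_of_canInc hci i]
          by_cases hia : i = a
          · rw [if_pos hia, hia]
            omega
          · rw [if_neg hia, hall i hia]
        rw [Finset.sum_subset hsub2 (fun ν hB hnot => by
          by_cases hsupp : ν ∈ l.support
          · exfalso
            obtain ⟨a, haf, hae⟩ := Finset.mem_image.1 hB
            have hcov : Covers mu ν := by
              rw [← hae]
              exact DMN.covers_incYD (Finset.mem_filter.1 haf).2
            exact hnot (Finset.mem_filter.2 ⟨hsupp, hcov⟩)
          · rw [Finsupp.notMem_support_iff.1 hsupp, zero_mul])]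
        rw [Finset.sum_image (fun x hx y hy h =>
          DMN.incYD_inj (Finset.mem_filter.1 hx).2 (Finset.mem_filter.1 hy).2 h)]
        rw [Finset.sum_filter]
        refine Finset.sum_congr rfl fun a _ => ?_
        by_cases hci : DMN.canInc mu a
        · rw [if_pos hci]
          rw [hl, ih, hnabla, if_pos (DMN.covers_incYD hci), DMN.remContent_incYD hci]
          rw [DMN.bsEnt_eq (n + 1) lam (DMN.incYD mu a) hNb]
          rw [Finset.sum_mul]
          refine Finset.sum_congr rfl fun r _ => ?_
          rw [Finset.sum_mul]
          refine Finset.sum_congr rfl fun t _ => ?_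
          by_cases hrs : DMN.RS (n + 1) lam (DMN.incYD mu a) r t
          · rw [if_pos hrs]
            unfold DMN.w2
            rw [if_pos ⟨hci, (DMN.RS_inc_iff hci).1 hrs⟩]
            push_cast
            ring
          · rw [if_neg hrs]
            unfold DMN.w2
            rw [if_neg (fun h => hrs ((DMN.RS_inc_iff hci).2 h.2))]
            rw [zero_mul]
        · rw [if_neg hci]
          refine (Finset.sum_eq_zero fun r _ => Finset.sum_eq_zero fun t _ => ?_).symm
          unfold DMN.w2
          exact if_neg (fun h => hci h.1)
      rw [hT1, hT2]
      rw [DMN.main_sum (n + 1) N (by omega) lam mu (by omega)]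
      rw [DMN.bsEnt_eq (n + 1 + 1) lam mu hNb]
      have hcongr : (∑ r ∈ range N, ∑ t ∈ range N,
            if DMN.RSf (n + 1 + 1) lam.rowLen mu.rowLen r t then (-1 : ℚ) ^ (t - r) else 0)
          = ∑ r ∈ range N, ∑ t ∈ range N,
            if DMN.RS (n + 1 + 1) lam mu r t then (-1 : ℚ) ^ (t - r) else 0 := rfl
      rw [hcongr]
      have hc0 : ((n : ℚ) + 1) ≠ 0 := by positivity
      rw [← mul_assoc]
      rw [show ((n : ℚ) + 1)⁻¹ * ((n + 1 : ℕ) : ℚ) = 1 by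
        push_cast
        field_simp]
      rw [one_mul]
  intro k hk lam mu
  have hkey := key (k - 1) lam mu
  rw [show k - 1 + 1 = k by omega] at hkey
  rw [hkey]
  rfl
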